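/- arXiv:0712.2430 — 3 statements merged into one kernel-verified Lean document; each statement's English description precedes it below -/
import Mathlib

section
/- The binary odometer T on [0,1) with Lebesgue measure is ergodic: every Borel set A with T^{-1}A = A (mod null sets) has Lebesgue measure 0 or 1. -/
open MeasureTheory Filter Set
open scoped symmDiff

/-- The `i`-th binary digit of `r` (for `i ≥ 1`), using the expansion with
finitely many trailing 1's. -/
noncomputable def bit (i : ℕ) (r : ℝ) : ℕ := ⌊r * 2 ^ i⌋.toNat % 2

/-- `tau r` is the index of the first 1 in the binary expansion of `r`. -/
noncomputable def tau (r : ℝ) : ℕ := sInf {i | 0 < i ∧ bit i r = 1}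

/-- The binary odometer: `T r = r - 2^{-τ(r)} + ∑_{l=1}^{τ(r)-1} 2^{-l}`,
i.e. the first `τ(r) - 1` bits are turned to 1 and bit `τ(r)` is turned to 0. -/
noncomputable def odometer (r : ℝ) : ℝ :=
  r - 2 ^ (-(tau r : ℤ)) + ∑ l ∈ Finset.Ico 1 (tau r), (2 : ℝ) ^ (-(l : ℤ))

/-- `Iset i j` is the set of reals in `[0,1)` whose first `i` binary digits,
read with the first digit as least significant bit, encode the integer `j`. -/
noncomputable def Iset (i j : ℕ) : Set ℝ :=
  {r ∈ Set.Ico (0 : ℝ) 1 | (∑ l ∈ Finset.Icc 1 i, bit l r * 2 ^ (l - 1)) = j}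

lemma bit_mem_Ico {n k l : ℕ} {r : ℝ} (hln : l ≤ n)
    (hr : r ∈ Set.Ico ((k : ℝ) / 2 ^ n) ((k + 1 : ℕ) / 2 ^ n)) :
    bit l r = (k.testBit (n - l)).toNat := by
  obtain ⟨h1, h2⟩ := hr
  set q : ℕ := 2 ^ (n - l) with hq
  have hq0 : (0:ℝ) < (q:ℝ) := by positivity
  have hpow : (2:ℝ) ^ n = 2 ^ l * q := by
    rw [hq]; push_cast; rw [← pow_add]; congr 1; omega
  have key : ((k:ℝ)) / 2^n * 2^l = (k:ℝ)/q := by rw [hpow]; field_simp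
  have key2 : ((k:ℝ)+1) / 2^n * 2^l = ((k:ℝ)+1)/q := by rw [hpow]; field_simp
  have hfl : ⌊r * 2 ^ l⌋ = (k / q : ℕ) := by
    rw [Int.floor_eq_iff]
    constructor
    · have hdm : ((k / q : ℕ) : ℝ) * q ≤ (k:ℝ) := by exact_mod_cast Nat.div_mul_le_self k q
      have h1' : (k:ℝ) / 2^n * 2^l ≤ r * 2^l :=
        mul_le_mul_of_nonneg_right h1 (by positivity)
      rw [key] at h1'
      calc ((k/q : ℕ):ℝ) ≤ (k:ℝ)/q := by rw [le_div_iff₀ hq0]; exact hdm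
        _ ≤ r * 2 ^ l := h1'
    · have hk : (k:ℕ) + 1 ≤ (k / q + 1) * q := by
        have h := Nat.div_add_mod k q
        have h' := Nat.mod_lt k (show 0 < q by positivity)
        nlinarith
      have h2' : r * 2^l < ((k:ℝ)+1) / q := by
        have := mul_lt_mul_of_pos_right h2 (show (0:ℝ) < 2^l by positivity)
        push_cast at this
        rw [key2] at this; exact this
      calc r * 2^l < ((k:ℝ)+1)/q := h2'
        _ ≤ ((k/q : ℕ) : ℝ) + 1 := by
            rw [div_le_iff₀ hq0]
            calc ((k:ℝ)+1) ≤ ((k/q:ℕ) + 1 : ℕ) * q := by exact_mod_cast hk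
              _ = (((k/q:ℕ):ℝ) + 1) * q := by push_cast; ring
  rw [bit, hfl]
  rw [Nat.testBit_eq_decide_div_mod_eq]
  simp only [Int.toNat_natCast]
  rcases Nat.mod_two_eq_zero_or_one (k / q) with h | h <;> simp [← hq, h]

noncomputable def rho (n k : ℕ) : ℕ := ∑ m ∈ Finset.range n, (k.testBit m).toNat * 2 ^ (n - 1 - m)

lemma rho_succ (n k : ℕ) : rho (n+1) k = (k.testBit n).toNat + 2 * rho n k := by
  rw [rho, Finset.sum_range_succ, rho, Finset.mul_sum]
  have : ∀ m ∈ Finset.range n, (k.testBit m).toNat * 2 ^ (n + 1 - 1 - m)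
      = 2 * ((k.testBit m).toNat * 2 ^ (n - 1 - m)) := by
    intro m hm
    rw [Finset.mem_range] at hm
    rw [show n + 1 - 1 - m = (n - 1 - m) + 1 by omega, pow_succ]; ring
  rw [Finset.sum_congr rfl this]
  simp; omega

lemma rho_lt (n k : ℕ) : rho n k < 2 ^ n := by
  induction n with
  | zero => simp [rho]
  | succ n ih =>
    rw [rho_succ, pow_succ]
    have : (Nat.testBit k n).toNat ≤ 1 := Bool.toNat_le _
    omega

lemma testBit_rho (n k i : ℕ) : (rho n k).testBit i
    = if i < n then k.testBit (n - 1 - i) else false := by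
  induction n generalizing i with
  | zero => simp [rho]
  | succ n ih =>
    rw [rho_succ]
    cases i with
    | zero =>
      simp only [Nat.testBit_zero]
      have ht : (k.testBit n).toNat ≤ 1 := Bool.toNat_le _
      have : ((k.testBit n).toNat + 2 * rho n k) % 2 = (k.testBit n).toNat := by omega
      rw [this]
      simp [Bool.toNat_eq_one (b := k.testBit n)]
    | succ i =>
      rw [Nat.testBit_succ]
      have : ((k.testBit n).toNat + 2 * rho n k) / 2 = rho n k := by
        have : (k.testBit n).toNat ≤ 1 := Bool.toNat_le _
        omega
      rw [this, ih]
      by_cases h : i < n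
      · simp [h, Nat.succ_lt_succ h, show n - 1 - i = n - i.succ by omega]
      · simp [h, show ¬ (i.succ < n+1) by omega]

lemma rho_rho {n k : ℕ} (h : k < 2 ^ n) : rho n (rho n k) = k := by
  apply Nat.eq_of_testBit_eq
  intro i
  rw [testBit_rho]
  by_cases hi : i < n
  · rw [if_pos hi, testBit_rho, if_pos (by omega), show n - 1 - (n - 1 - i) = i by omega]
  · rw [if_neg hi, eq_comm]
    exact Nat.testBit_lt_two_pow (lt_of_lt_of_le h (Nat.pow_le_pow_right (by norm_num) (by omega)))

lemma sum_bit_eq {n k : ℕ} {r : ℝ}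
    (hr : r ∈ Set.Ico ((k : ℝ) / 2 ^ n) ((k + 1 : ℕ) / 2 ^ n)) :
    (∑ l ∈ Finset.Icc 1 n, bit l r * 2 ^ (l - 1)) = rho n k := by
  have h1 : (∑ l ∈ Finset.Icc 1 n, bit l r * 2 ^ (l - 1))
      = ∑ m ∈ Finset.range n, bit (m + 1) r * 2 ^ m := by
    rw [show Finset.Icc 1 n = Finset.Ico 1 (n+1) by rfl,
        Finset.sum_Ico_eq_sum_range]
    simp [add_comm]
  rw [h1]
  have h2 : ∀ m ∈ Finset.range n, bit (m+1) r * 2^m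
      = (k.testBit (n - 1 - m)).toNat * 2 ^ m := by
    intro m hm
    rw [Finset.mem_range] at hm
    rw [bit_mem_Ico (by omega) hr, show n - (m+1) = n - 1 - m by omega]
  rw [Finset.sum_congr rfl h2, rho]
  rw [← Finset.sum_range_reflect]
  apply Finset.sum_congr rfl
  intro m hm
  rw [Finset.mem_range] at hm
  rw [show n - 1 - (n - 1 - m) = m by omega]

lemma mem_D_of_mem_Ico {n : ℕ} {r : ℝ} (hr : r ∈ Set.Ico (0:ℝ) 1) :
    ∃ k : ℕ, k < 2^n ∧ r ∈ Set.Ico ((k : ℝ) / 2 ^ n) (((k + 1 : ℕ) : ℝ) / 2 ^ n) := by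
  obtain ⟨h0, h1⟩ := hr
  have hp : (0:ℝ) < 2^n := by positivity
  have hfl0 : 0 ≤ ⌊r * 2^n⌋ := Int.floor_nonneg.mpr (by positivity)
  have hlt : ⌊r * 2^n⌋ < 2^n := by
    apply Int.floor_lt.mpr; push_cast; nlinarith
  have hcast : ((⌊r * 2^n⌋.toNat : ℕ) : ℝ) = ((⌊r * 2^n⌋ : ℤ) : ℝ) := by
    exact_mod_cast congrArg (fun z : ℤ => (z : ℝ)) (Int.toNat_of_nonneg hfl0)
  refine ⟨⌊r * 2^n⌋.toNat, ?_, ?_, ?_⟩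
  · have h2 : ((⌊r * 2^n⌋.toNat : ℕ) : ℤ) < ((2^n : ℕ) : ℤ) := by
      rw [Int.toNat_of_nonneg hfl0]; exact_mod_cast hlt
    exact_mod_cast h2
  · rw [div_le_iff₀ hp, hcast]
    exact Int.floor_le _
  · rw [lt_div_iff₀ hp]
    have h3 := Int.lt_floor_add_one (r * 2^n)
    push_cast
    rw [hcast]
    linarith

lemma Iset_eq {n j : ℕ} (hj : j < 2 ^ n) :
    Iset n j = Set.Ico ((rho n j : ℝ) / 2 ^ n) (((rho n j + 1 : ℕ) : ℝ) / 2 ^ n) := by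
  ext r
  constructor
  · rintro ⟨hr01, hsum⟩
    obtain ⟨k, hk, hrk⟩ := mem_D_of_mem_Ico (n := n) hr01
    have : j = rho n k := by rw [← hsum, sum_bit_eq hrk]
    rw [this, rho_rho hk]
    exact hrk
  · intro hr
    have hD : r ∈ Set.Ico ((rho n j : ℝ) / 2 ^ n) (((rho n j + 1 : ℕ) : ℝ) / 2 ^ n) := hr
    have hsub : r ∈ Set.Ico (0:ℝ) 1 := by
      obtain ⟨ha, hb⟩ := hD
      have hp : (0:ℝ) < 2^n := by positivity
      constructor
      · calc (0:ℝ) ≤ (rho n j : ℝ)/2^n := by positivity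
          _ ≤ r := ha
      · calc r < ((rho n j + 1 : ℕ) : ℝ) / 2^n := hb
          _ ≤ 1 := by
            rw [div_le_one hp]
            have : rho n j + 1 ≤ 2^n := rho_lt n j
            exact_mod_cast this
    exact ⟨hsub, by rw [sum_bit_eq hD, rho_rho hj]⟩

lemma testBit_div_pow (x j i : ℕ) : (x / 2 ^ j).testBit i = x.testBit (j + i) := by
  rw [Nat.testBit, Nat.shiftRight_eq_div_pow, Nat.div_div_eq_div_mul, ← pow_add,
      Nat.testBit, Nat.shiftRight_eq_div_pow]

lemma testBit_pred {j s : ℕ} (hs : j.testBit s = true) (hmin : ∀ m < s, j.testBit m = false)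
    (m : ℕ) :
    (j - 1).testBit m = if m < s then true else if m = s then false else j.testBit m := by
  have hmod : j % 2 ^ (s+1) = 2 ^ s := by
    apply Nat.eq_of_testBit_eq
    intro i
    rw [Nat.testBit_mod_two_pow]
    rcases lt_trichotomy i s with h | h | h
    · rw [hmin i h, Bool.and_false, eq_comm]
      exact Nat.testBit_two_pow_of_ne (by omega)
    · subst h
      rw [decide_eq_true (by omega : i < i + 1), hs, Nat.testBit_two_pow_self, Bool.true_and]
    · rw [Nat.testBit_two_pow_of_ne (by omega : s ≠ i)]
      rcases Nat.lt_or_ge i (s+1) with h' | h'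
      · omega
      · rw [decide_eq_false (by omega : ¬ (i < s + 1)), Bool.false_and]
  have h1s : 1 ≤ 2 ^ s := Nat.one_le_two_pow
  have hss : 2 ^ s < 2 ^ (s+1) := by
    have : 2 ^ (s+1) = 2 * 2 ^ s := by ring
    omega
  have hdm := Nat.div_add_mod j (2 ^ (s+1))
  have hsplit : j = 2 ^ (s+1) * (j / 2 ^ (s+1)) + 2 ^ s := by omega
  have hpred : j - 1 = 2 ^ (s+1) * (j / 2 ^ (s+1)) + (2 ^ s - 1) := by omega
  have hqpred : (j - 1) / 2 ^ (s+1) = j / 2 ^ (s+1) := by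
    conv_lhs => rw [hpred]
    rw [Nat.mul_add_div (by positivity)]
    have hz : (2 ^ s - 1) / 2 ^ (s+1) = 0 := Nat.div_eq_of_lt (by omega)
    rw [hz]
    omega
  have hmodpred : (j - 1) % 2 ^ (s+1) = 2 ^ s - 1 := by
    conv_lhs => rw [hpred]
    rw [Nat.mul_add_mod]
    exact Nat.mod_eq_of_lt (by omega)
  rcases Nat.lt_or_ge m (s+1) with hm | hm
  · have e : (j-1).testBit m = ((j-1) % 2^(s+1)).testBit m := by
      rw [Nat.testBit_mod_two_pow, decide_eq_true hm, Bool.true_and]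
    rw [e, hmodpred, Nat.testBit_two_pow_sub_one]
    rcases lt_trichotomy m s with h | h | h
    · simp [h]
    · simp [h]
    · omega
  · have e1 : (j-1).testBit m = ((j-1) / 2^(s+1)).testBit (m - (s+1)) := by
      rw [testBit_div_pow, show s + 1 + (m - (s+1)) = m by omega]
    have e2 : j.testBit m = (j / 2^(s+1)).testBit (m - (s+1)) := by
      rw [testBit_div_pow, show s + 1 + (m - (s+1)) = m by omega]
    rw [e1, hqpred, ← e2, if_neg (by omega), if_neg (by omega)]

lemma rho_pred {n j s : ℕ} (hs : j.testBit s = true) (hmin : ∀ m < s, j.testBit m = false)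
    (hsn : s < n) :
    rho n (j-1) + 2^(n-1-s) = rho n j + ∑ m ∈ Finset.range s, 2^(n-1-m) := by
  have hsplit : ∀ k : ℕ, rho n k
      = (∑ m ∈ Finset.range (s+1), (k.testBit m).toNat * 2 ^ (n - 1 - m))
        + ∑ m ∈ Finset.Ico (s+1) n, (k.testBit m).toNat * 2 ^ (n - 1 - m) := by
    intro k
    rw [rho, Finset.range_eq_Ico, ← Finset.sum_Ico_consecutive _ (by omega : 0 ≤ s+1) (by omega : s+1 ≤ n), Finset.range_eq_Ico]
  have htail : ∀ m ∈ Finset.Ico (s+1) n, ((j-1).testBit m).toNat * 2 ^ (n - 1 - m)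
      = (j.testBit m).toNat * 2 ^ (n - 1 - m) := by
    intro m hm
    rw [Finset.mem_Ico] at hm
    rw [testBit_pred hs hmin m, if_neg (by omega), if_neg (by omega)]
  have hhead1 : (∑ m ∈ Finset.range (s+1), ((j-1).testBit m).toNat * 2 ^ (n - 1 - m))
      = ∑ m ∈ Finset.range s, 2^(n-1-m) := by
    rw [Finset.sum_range_succ, testBit_pred hs hmin s, if_neg (by omega), if_pos rfl]
    simp only [Bool.toNat_false, zero_mul, add_zero]
    apply Finset.sum_congr rfl
    intro m hm
    rw [Finset.mem_range] at hm
    rw [testBit_pred hs hmin m, if_pos hm, Bool.toNat_true, one_mul]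
  have hhead2 : (∑ m ∈ Finset.range (s+1), (j.testBit m).toNat * 2 ^ (n - 1 - m))
      = 2^(n-1-s) := by
    rw [Finset.sum_range_succ, hs, Bool.toNat_true, one_mul]
    rw [Finset.sum_eq_zero, zero_add]
    intro m hm
    rw [Finset.mem_range] at hm
    rw [hmin m hm, Bool.toNat_false, zero_mul]
  rw [hsplit (j-1), hsplit j, hhead1, hhead2, Finset.sum_congr rfl htail]
  ring

lemma c_mul_pow {n s : ℕ} (hsn : s < n) :
    (-(2:ℝ)^(-((s+1 : ℕ) : ℤ)) + ∑ l ∈ Finset.Ico 1 (s+1), (2:ℝ)^(-(l:ℤ))) * 2^n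
      = (∑ m ∈ Finset.range s, (2:ℝ)^(n-1-m)) - 2^(n-1-s) := by
  have key : ∀ l : ℕ, l ≤ n → (2:ℝ)^(-(l:ℤ)) * 2^n = 2^(n-l) := by
    intro l hl
    rw [← zpow_natCast (2:ℝ) n, ← zpow_add₀ (two_ne_zero) , ← zpow_natCast (2:ℝ) (n - l)]
    congr 1
    omega
  rw [add_mul, neg_mul, key (s+1) (by omega), Finset.sum_mul]
  rw [show n - (s+1) = n - 1 - s by omega]
  rw [Finset.sum_Ico_eq_sum_range, show s + 1 - 1 = s from rfl]
  have : ∀ m ∈ Finset.range s, (2:ℝ)^(-((1 + m : ℕ):ℤ)) * 2^n = 2^(n-1-m) := by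
    intro m hm
    rw [Finset.mem_range] at hm
    rw [key (1+m) (by omega), show n - (1+m) = n -1 - m by omega]
  rw [Finset.sum_congr rfl this]
  ring

lemma exists_lowbit {j : ℕ} (hj0 : j ≠ 0) :
    ∃ s, j.testBit s = true ∧ ∀ m < s, j.testBit m = false := by
  have hne : {m | j.testBit m = true}.Nonempty := by
    by_contra h
    rw [Set.not_nonempty_iff_eq_empty] at h
    apply hj0
    apply Nat.eq_of_testBit_eq
    intro i
    rw [Nat.zero_testBit]
    by_contra hi
    have : i ∈ {m | j.testBit m = true} := by simpa using hi
    rw [h] at this; exact this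
  refine ⟨sInf {m | j.testBit m = true}, Nat.sInf_mem hne, fun m hm => ?_⟩
  by_contra h
  rw [Bool.not_eq_false] at h
  have : sInf {m | j.testBit m = true} ≤ m := Nat.sInf_le h
  omega

lemma bit_of_mem_Iset {n j l : ℕ} {r : ℝ} (hj : j < 2^n) (hl1 : 1 ≤ l) (hln : l ≤ n)
    (hr : r ∈ Iset n j) : bit l r = (j.testBit (l-1)).toNat := by
  rw [Iset_eq hj] at hr
  rw [bit_mem_Ico hln hr, testBit_rho, if_pos (by omega), show n - 1 - (n - l) = l - 1 by omega]

lemma tau_of_mem_Iset {n j s : ℕ} (hj : j < 2^n)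
    (hs : j.testBit s = true) (hmin : ∀ m < s, j.testBit m = false) (hsn : s < n)
    {r : ℝ} (hr : r ∈ Iset n j) : tau r = s + 1 := by
  have hmem : s + 1 ∈ {i | 0 < i ∧ bit i r = 1} := by
    refine ⟨by omega, ?_⟩
    rw [bit_of_mem_Iset hj (by omega) (by omega) hr]
    simp [hs]
  apply le_antisymm (Nat.sInf_le hmem)
  by_contra h
  push_neg at h
  have hlt : tau r < s + 1 := h
  have : tau r ∈ {i | 0 < i ∧ bit i r = 1} := Nat.sInf_mem ⟨s+1, hmem⟩
  obtain ⟨h0, h1⟩ := this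
  rw [bit_of_mem_Iset hj (by omega) (by omega) hr, hmin (tau r - 1) (by omega)] at h1
  simp at h1

lemma odometer_translate {n j : ℕ} (hj0 : j ≠ 0) (hj : j < 2^n) :
    ∃ c : ℝ, (∀ r ∈ Iset n j, odometer r = r + c) ∧
      (fun x => x + c) ⁻¹' (Iset n (j-1)) = Iset n j := by
  obtain ⟨s, hs, hmin⟩ := exists_lowbit hj0
  have hsn : s < n := by
    by_contra h
    push_neg at h
    rw [Nat.testBit_lt_two_pow (lt_of_lt_of_le hj (Nat.pow_le_pow_right (by norm_num) h))] at hs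
    exact Bool.false_ne_true hs
  set c : ℝ := -(2:ℝ)^(-((s+1 : ℕ) : ℤ)) + ∑ l ∈ Finset.Ico 1 (s+1), (2:ℝ)^(-(l:ℤ)) with hc
  refine ⟨c, ?_, ?_⟩
  · intro r hr
    rw [odometer, tau_of_mem_Iset hj hs hmin hsn hr, hc]
    push_cast
    ring
  · have hpow : (0:ℝ) < 2^n := by positivity
    have hkey : ((rho n (j-1) : ℕ) : ℝ) = (rho n j : ℝ) + c * 2^n := by
      have := rho_pred hs hmin hsn
      have hcast : ((rho n (j-1)) : ℝ) + 2^(n-1-s) = (rho n j : ℝ) + ∑ m ∈ Finset.range s, (2:ℝ)^(n-1-m) := by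
        exact_mod_cast congrArg (fun x : ℕ => (x : ℝ)) this
      rw [hc, c_mul_pow hsn]
      push_cast at hcast ⊢
      linarith
    rw [Iset_eq hj, Iset_eq (show j - 1 < 2^n by omega)]
    ext x
    simp only [Set.mem_preimage, Set.mem_Ico]
    constructor
    · rintro ⟨h1, h2⟩
      constructor
      · rw [div_le_iff₀ hpow] at h1 ⊢
        rw [hkey] at h1; linarith
      · rw [lt_div_iff₀ hpow] at h2 ⊢
        push_cast at h2 ⊢
        rw [hkey] at h2; push_cast at h2; linarith
    · rintro ⟨h1, h2⟩
      constructor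
      · rw [div_le_iff₀ hpow] at h1 ⊢
        rw [hkey]; linarith
      · rw [lt_div_iff₀ hpow] at h2 ⊢
        push_cast at h2 ⊢
        rw [hkey]; push_cast; linarith

def D (n k : ℕ) : Set ℝ := Set.Ico ((k : ℝ) / 2 ^ n) (((k + 1 : ℕ) : ℝ) / 2 ^ n)

section Meas
variable {A : Set ℝ} (hA : MeasurableSet A) (hA1 : A ⊆ Set.Ico (0 : ℝ) 1)
    (hinv : volume ((Set.Ico (0 : ℝ) 1 ∩ odometer ⁻¹' A) ∆ A) = 0)

lemma Iset_subset (n j : ℕ) : Iset n j ⊆ Set.Ico (0:ℝ) 1 := fun r hr => hr.1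

lemma measurable_Iset {n j : ℕ} (hj : j < 2^n) : MeasurableSet (Iset n j) := by
  rw [Iset_eq hj]; exact measurableSet_Ico

include hinv in
lemma step {n j : ℕ} (hj0 : j ≠ 0) (hj : j < 2^n) :
    volume (A ∩ Iset n (j-1)) = volume (A ∩ Iset n j) := by
  obtain ⟨c, hodo, hpre⟩ := odometer_translate hj0 hj
  set X := Set.Ico (0:ℝ) 1 ∩ odometer ⁻¹' A with hX
  have hae : X =ᵐ[volume] A := (measure_symmDiff_eq_zero_iff).mp hinv
  have hset : X ∩ Iset n j = (fun x => x + c) ⁻¹' (A ∩ Iset n (j-1)) := by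
    ext r
    simp only [hX, Set.mem_inter_iff, Set.mem_preimage]
    constructor
    · rintro ⟨⟨h01, hTA⟩, hIj⟩
      have hrc : r + c ∈ Iset n (j-1) := by rw [← hpre] at hIj; exact hIj
      rw [hodo r hIj] at hTA
      exact ⟨hTA, hrc⟩
    · rintro ⟨hAc, hIc⟩
      have hIj : r ∈ Iset n j := by rw [← hpre]; exact hIc
      exact ⟨⟨Iset_subset n j hIj, by rw [hodo r hIj]; exact hAc⟩, hIj⟩
  have h1 : volume (A ∩ Iset n j) = volume (X ∩ Iset n j) :=
    (measure_congr (hae.symm.inter (EventuallyEq.refl _ _))).symm ▸ rfl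
  rw [h1, hset, measure_preimage_add_right]
end Meas

section Meas2
variable {A : Set ℝ} (hA : MeasurableSet A) (hA1 : A ⊆ Set.Ico (0 : ℝ) 1)
    (hinv : volume ((Set.Ico (0 : ℝ) 1 ∩ odometer ⁻¹' A) ∆ A) = 0)

include hinv in
lemma const_meas {n : ℕ} : ∀ j < 2^n, volume (A ∩ Iset n j) = volume (A ∩ Iset n 0) := by
  intro j
  induction j with
  | zero => intro _; rfl
  | succ j ih =>
    intro hj
    have := step (A := A) hinv (j := j+1) (by omega) hj
    simp only [Nat.add_sub_cancel] at this
    rw [← this]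
    exact ih (by omega)

lemma Iset_disjoint {n j j' : ℕ} (h : j ≠ j') : Disjoint (Iset n j) (Iset n j') := by
  rw [Set.disjoint_left]
  rintro r ⟨_, hr2⟩ ⟨_, hr2'⟩
  exact h (by rw [← hr2, hr2'])

include hA hA1 hinv in
lemma meas_inter_Iset {n : ℕ} : ∀ j < 2^n,
    volume (A ∩ Iset n j) = volume A * ((2:ENNReal)^n)⁻¹ := by
  have hcover : A = ⋃ j ∈ Finset.range (2^n), (A ∩ Iset n j) := by
    ext r
    simp only [Set.mem_iUnion, Set.mem_inter_iff, Finset.mem_range]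
    constructor
    · intro hr
      obtain ⟨k, hk, hrk⟩ := mem_D_of_mem_Ico (n := n) (hA1 hr)
      exact ⟨rho n k, rho_lt n k, by simpa using ⟨hr, ⟨hA1 hr, sum_bit_eq hrk⟩⟩⟩
    · rintro ⟨j, _, hj2⟩
      exact hj2.1
  have htot : volume A = ∑ j ∈ Finset.range (2^n), volume (A ∩ Iset n j) := by
    conv_lhs => rw [hcover]
    rw [measure_biUnion_finset]
    · intro j hj j' hj' hne
      exact (Iset_disjoint hne).mono Set.inter_subset_right Set.inter_subset_right
    · intro j hj
      rw [Finset.mem_range] at hj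
      exact hA.inter (measurable_Iset hj)
  have hconst := const_meas (A := A) hinv (n := n)
  intro j hj
  rw [hconst j hj]
  have htot2 : volume A = (2^n : ENNReal) * volume (A ∩ Iset n 0) := by
    rw [htot, Finset.sum_congr rfl (fun j hj => hconst j (Finset.mem_range.mp hj))]
    rw [Finset.sum_const, Finset.card_range, nsmul_eq_mul]
    push_cast
    ring
  rw [htot2]
  rw [mul_comm, ← mul_assoc, ENNReal.inv_mul_cancel (by positivity) (by simp), one_mul]

include hA hA1 hinv in
lemma meas_inter_D {n k : ℕ} (hk : k < 2^n) :
    volume (A ∩ D n k) = volume A * ((2:ENNReal)^n)⁻¹ := by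
  show volume (A ∩ Set.Ico ((k : ℝ) / 2 ^ n) (((k + 1 : ℕ) : ℝ) / 2 ^ n))
      = volume A * ((2:ENNReal)^n)⁻¹
  have h1 : Iset n (rho n k) = Set.Ico ((k : ℝ) / 2 ^ n) (((k + 1 : ℕ) : ℝ) / 2 ^ n) := by
    rw [Iset_eq (rho_lt n k), rho_rho hk]
  rw [← h1]
  exact meas_inter_Iset hA hA1 hinv (rho n k) (rho_lt n k)
end Meas2



def Csys : Set (Set ℝ) := {S | ∃ n k : ℕ, k < 2^n ∧ S = D n k}

lemma D_subset_Ico01 {n k : ℕ} (hk : k < 2^n) : D n k ⊆ Set.Ico (0:ℝ) 1 := by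
  intro x hx
  obtain ⟨h1, h2⟩ := hx
  have hp : (0:ℝ) < 2^n := by positivity
  constructor
  · calc (0:ℝ) ≤ (k:ℝ)/2^n := by positivity
      _ ≤ x := h1
  · calc x < ((k+1:ℕ):ℝ)/2^n := h2
      _ ≤ 1 := by
        rw [div_le_one hp]
        exact_mod_cast Nat.succ_le_of_lt hk

lemma Ico01_eq_D : Set.Ico (0:ℝ) 1 = D 0 0 := by
  simp [D]

lemma D_nested {n n' k k' : ℕ} (hnn : n ≤ n') {x : ℝ}
    (hx1 : x ∈ D n k) (hx2 : x ∈ D n' k') : D n' k' ⊆ D n k := by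
  obtain ⟨a1, a2⟩ := hx1
  obtain ⟨b1, b2⟩ := hx2
  have hp : (0:ℝ) < 2^n := by positivity
  have hp' : (0:ℝ) < 2^n' := by positivity
  have hpow : (2:ℝ)^n' = 2^n * 2^(n'-n) := by
    rw [← pow_add]; congr 1; omega
  -- integer inequalities
  have e1 : (k:ℝ) * 2^(n'-n) ≤ x * 2^n' := by
    rw [div_le_iff₀ hp] at a1
    calc (k:ℝ) * 2^(n'-n) ≤ x * 2^n * 2^(n'-n) := by
          apply mul_le_mul_of_nonneg_right a1 (by positivity)
      _ = x * 2^n' := by rw [hpow]; ring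
  have e2 : x * 2^n' < ((k:ℝ)+1) * 2^(n'-n) := by
    rw [lt_div_iff₀ hp] at a2
    push_cast at a2
    calc x * 2^n' = x * 2^n * 2^(n'-n) := by rw [hpow]; ring
      _ < ((k:ℝ)+1) * 2^(n'-n) := by
          apply mul_lt_mul_of_pos_right a2 (by positivity)
  have e3 : (k':ℝ) ≤ x * 2^n' := by rwa [div_le_iff₀ hp'] at b1
  have e4 : x * 2^n' < (k':ℝ) + 1 := by
    rw [lt_div_iff₀ hp'] at b2; push_cast at b2; linarith
  have i1 : (k : ℕ) * 2^(n'-n) ≤ k' := by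
    have : (k:ℝ) * 2^(n'-n) < (k':ℝ) + 1 := lt_of_le_of_lt e1 e4
    have := this
    have hcast : ((k * 2^(n'-n) : ℕ) : ℝ) < ((k' + 1 : ℕ) : ℝ) := by push_cast; linarith
    exact_mod_cast Nat.lt_succ_iff.mp (by exact_mod_cast hcast)
  have i2 : k' + 1 ≤ (k+1) * 2^(n'-n) := by
    have : (k':ℝ) < ((k:ℝ)+1) * 2^(n'-n) := lt_of_le_of_lt e3 e2
    have hcast : ((k' : ℕ) : ℝ) < (((k+1) * 2^(n'-n) : ℕ) : ℝ) := by push_cast; linarith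
    exact_mod_cast Nat.succ_le_of_lt (by exact_mod_cast hcast)
  intro y hy
  obtain ⟨c1, c2⟩ := hy
  have hr1 : ((k * 2^(n'-n) : ℕ) : ℝ) ≤ (k' : ℝ) := by exact_mod_cast i1
  have hr2 : ((k' + 1 : ℕ) : ℝ) ≤ (((k+1) * 2^(n'-n) : ℕ) : ℝ) := by exact_mod_cast i2
  push_cast at hr1 hr2
  constructor
  · calc (k:ℝ)/2^n = (k:ℝ) * 2^(n'-n) / 2^n' := by rw [hpow]; field_simp
      _ ≤ (k':ℝ)/2^n' := by gcongr
      _ ≤ y := c1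
  · calc y < ((k'+1:ℕ):ℝ)/2^n' := c2
      _ ≤ ((k:ℝ)+1) * 2^(n'-n) / 2^n' := by gcongr; push_cast; linarith
      _ = ((k+1:ℕ):ℝ)/2^n := by rw [hpow]; push_cast; field_simp

lemma isPiSystem_Csys : IsPiSystem Csys := by
  rintro S1 ⟨n, k, hk, rfl⟩ S2 ⟨n', k', hk', rfl⟩ hne
  obtain ⟨x, hx1, hx2⟩ := hne
  rcases le_total n n' with h | h
  · have := D_nested h hx1 hx2
    rw [Set.inter_eq_right.mpr this]
    exact ⟨n', k', hk', rfl⟩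
  · have := D_nested h hx2 hx1
    rw [Set.inter_eq_left.mpr this]
    exact ⟨n, k, hk, rfl⟩

abbrev m0 : MeasurableSpace ℝ := MeasurableSpace.generateFrom Csys

lemma m0_le_borel : m0 ≤ (inferInstance : MeasurableSpace ℝ) := by
  apply MeasurableSpace.generateFrom_le
  rintro t ⟨n, k, hk, rfl⟩
  exact measurableSet_Ico

lemma m0_Ico01 : MeasurableSet[m0] (Set.Ico (0:ℝ) 1) := by
  rw [Ico01_eq_D]
  exact MeasurableSpace.measurableSet_generateFrom ⟨0, 0, by norm_num, rfl⟩

lemma open_inter_m0 {U : Set ℝ} (hU : IsOpen U) :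
    MeasurableSet[m0] (U ∩ Set.Ico (0:ℝ) 1) := by
  have key : U ∩ Set.Ico (0:ℝ) 1
      = ⋃ p ∈ {p : ℕ × ℕ | p.2 < 2^p.1 ∧ D p.1 p.2 ⊆ U}, D p.1 p.2 := by
    ext x
    simp only [Set.mem_iUnion, Set.mem_inter_iff, Set.mem_setOf_eq]
    constructor
    · rintro ⟨hxU, hx01⟩
      obtain ⟨ε, hε, hball⟩ := Metric.isOpen_iff.mp hU x hxU
      obtain ⟨n, hn⟩ := exists_pow_lt_of_lt_one hε (by norm_num : (1:ℝ)/2 < 1)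
      obtain ⟨k, hklt, hxk⟩ := mem_D_of_mem_Ico (n := n) hx01
      have hp : (0:ℝ) < 2^n := by positivity
      refine ⟨⟨n, k⟩, ⟨hklt, ?_⟩, hxk⟩
      intro y hy
      apply hball
      rw [Metric.mem_ball, Real.dist_eq]
      obtain ⟨ha, hb⟩ := hy
      obtain ⟨ha', hb'⟩ := hxk
      have hlen : ((k+1:ℕ):ℝ)/2^n - (k:ℝ)/2^n = (1/2)^n := by
        push_cast; field_simp; rw [← mul_pow]; norm_num
      have : |y - x| < (1/2)^n := by
        rw [abs_lt]
        constructor <;> push_cast at * <;> [linarith; linarith]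
      linarith
    · rintro ⟨p, ⟨hp1, hp2⟩, hxp⟩
      exact ⟨hp2 hxp, D_subset_Ico01 hp1 hxp⟩
  rw [key]
  apply MeasurableSet.biUnion (Set.to_countable _)
  rintro ⟨n, k⟩ ⟨h1, _⟩
  exact MeasurableSpace.measurableSet_generateFrom ⟨n, k, h1, rfl⟩

lemma m0_measurable_of_borel {A : Set ℝ} (hA : MeasurableSet A) (hA1 : A ⊆ Set.Ico (0:ℝ) 1) :
    MeasurableSet[m0] A := by
  let m1 : MeasurableSpace ℝ :=
    { MeasurableSet' := fun S => MeasurableSet[m0] (S ∩ Set.Ico (0:ℝ) 1)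
      measurableSet_empty := by simp
      measurableSet_compl := fun S hS => by
        show MeasurableSet[m0] (Sᶜ ∩ Set.Ico (0:ℝ) 1)
        have h : Sᶜ ∩ Set.Ico (0:ℝ) 1 = Set.Ico (0:ℝ) 1 \ (S ∩ Set.Ico (0:ℝ) 1) := by
          ext x; simp only [Set.mem_inter_iff, Set.mem_compl_iff, Set.mem_diff]; tauto
        rw [h]
        exact MeasurableSet.diff m0_Ico01 hS
      measurableSet_iUnion := fun f hf => by
        show MeasurableSet[m0] ((⋃ i, f i) ∩ Set.Ico (0:ℝ) 1)
        rw [Set.iUnion_inter]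
        exact MeasurableSet.iUnion hf }
  have hborel : Real.measurableSpace ≤ m1 := by
    have hbe : Real.measurableSpace = borel ℝ := BorelSpace.measurable_eq
    rw [hbe, borel]
    apply MeasurableSpace.generateFrom_le
    intro U hU
    exact open_inter_m0 hU
  have : MeasurableSet[m1] A := hborel _ hA
  have h2 : A ∩ Set.Ico (0:ℝ) 1 = A := Set.inter_eq_left.mpr hA1
  rw [show MeasurableSet[m1] A = MeasurableSet[m0] (A ∩ Set.Ico (0:ℝ) 1) from rfl, h2] at this
  exact this

lemma volume_D {n k : ℕ} (hk : k < 2^n) : volume (D n k) = ((2:ENNReal)^n)⁻¹ := by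
  rw [D, Real.volume_Ico]
  have h : ((k+1:ℕ):ℝ)/2^n - (k:ℝ)/2^n = ((2:ℝ)^n)⁻¹ := by
    push_cast; field_simp; ring
  rw [h, ENNReal.ofReal_inv_of_pos (by positivity), ENNReal.ofReal_pow (by norm_num)]
  norm_num

lemma volume_Ico01 : volume (Set.Ico (0:ℝ) 1) = 1 := by
  rw [Real.volume_Ico]; norm_num

/-- The binary odometer is ergodic for Lebesgue measure on `[0,1)`: any Borel
set invariant mod null sets has measure 0 or 1. -/
theorem stmt5 (A : Set ℝ) (hA : MeasurableSet A) (hA1 : A ⊆ Set.Ico (0 : ℝ) 1)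
    (hinv : volume ((Set.Ico (0 : ℝ) 1 ∩ odometer ⁻¹' A) ∆ A) = 0) :
    volume A = 0 ∨ volume A = 1 := by
  have hAfin : volume A ≤ 1 := by
    calc volume A ≤ volume (Set.Ico (0:ℝ) 1) := measure_mono hA1
      _ = 1 := volume_Ico01
  have hAne : volume A ≠ ⊤ := by
    intro h; rw [h] at hAfin; exact absurd hAfin (by simp)
  have hP : ∀ ⦃t : Set ℝ⦄, MeasurableSet[m0] t →
      volume (A ∩ t) = volume A * volume (t ∩ Set.Ico (0:ℝ) 1) := by
    apply MeasurableSpace.induction_on_inter (m := m0) (s := Csys)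
      (C := fun t _ => volume (A ∩ t) = volume A * volume (t ∩ Set.Ico (0:ℝ) 1))
      rfl isPiSystem_Csys
    · simp
    · rintro t ⟨n, k, hk, rfl⟩
      rw [meas_inter_D hA hA1 hinv hk, Set.inter_eq_left.mpr (D_subset_Ico01 hk), volume_D hk]
    · intro t ht hPt
      have htb : MeasurableSet t := m0_le_borel _ ht
      have hvle : volume (t ∩ Set.Ico (0:ℝ) 1) ≤ 1 := by
        calc volume (t ∩ Set.Ico (0:ℝ) 1) ≤ volume (Set.Ico (0:ℝ) 1) :=
              measure_mono Set.inter_subset_right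
          _ = 1 := volume_Ico01
      have hvne : volume (t ∩ Set.Ico (0:ℝ) 1) ≠ ⊤ := by
        intro h; rw [h] at hvle; exact absurd hvle (by simp)
      have h1 : A ∩ tᶜ = A \ (A ∩ t) := by
        ext x; simp only [Set.mem_inter_iff, Set.mem_compl_iff, Set.mem_diff]; tauto
      have h2 : tᶜ ∩ Set.Ico (0:ℝ) 1 = Set.Ico (0:ℝ) 1 \ (t ∩ Set.Ico (0:ℝ) 1) := by
        ext x; simp only [Set.mem_inter_iff, Set.mem_compl_iff, Set.mem_diff]; tauto
      have hfin1 : volume (A ∩ t) ≠ ⊤ := by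
        intro h
        have : volume (A ∩ t) ≤ volume A := measure_mono Set.inter_subset_left
        rw [h] at this
        exact hAne (top_le_iff.mp this)
      rw [h1, h2]
      rw [measure_diff Set.inter_subset_left (hA.inter htb).nullMeasurableSet hfin1]
      rw [measure_diff Set.inter_subset_right
        (htb.inter measurableSet_Ico).nullMeasurableSet hvne]
      rw [hPt, volume_Ico01]
      have hadd : volume A * (1 - volume (t ∩ Set.Ico (0:ℝ) 1))
            + volume A * volume (t ∩ Set.Ico (0:ℝ) 1) = volume A := by
        rw [← mul_add, tsub_add_cancel_of_le hvle, mul_one]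
      rw [eq_comm]
      exact ENNReal.eq_sub_of_add_eq (ENNReal.mul_ne_top hAne hvne) hadd
    · intro f hdisj hmeas hPf
      have hmb : ∀ i, MeasurableSet (f i) := fun i => m0_le_borel _ (hmeas i)
      rw [Set.inter_iUnion, Set.iUnion_inter]
      rw [measure_iUnion (fun i j hij => (hdisj hij).mono
            Set.inter_subset_right Set.inter_subset_right)
          (fun i => hA.inter (hmb i))]
      rw [measure_iUnion (fun i j hij => (hdisj hij).mono
            Set.inter_subset_left Set.inter_subset_left)
          (fun i => (hmb i).inter measurableSet_Ico)]
      rw [tsum_congr hPf, ENNReal.tsum_mul_left]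
  have hAm0 : MeasurableSet[m0] A := m0_measurable_of_borel hA hA1
  have hPA := hP hAm0
  rw [Set.inter_self, Set.inter_eq_left.mpr hA1] at hPA
  rcases eq_or_ne (volume A) 0 with h0 | h0
  · exact Or.inl h0
  · right
    have h1 : volume A * 1 = volume A * volume A := by rw [mul_one]; exact hPA
    exact ((ENNReal.mul_left_strictMono h0 hAne).injective ((mul_comm 1 (volume A)).trans h1)).symm
end

section
/- Let {X_i} be a stationary process with values in a finite set, fix N ≥ 1, and suppose the process is ergodic. Then the estimator Ê_n = [Σ_{j=1}^{n−N} 1{X_{−j−N}^{−j−1} = X_{−N}^{−1}} · X_{−j}] / [Σ_{j=1}^{n−N} 1{X_{−j−N}^{−j−1} = X_{−N}^{−1}}] converges almost surely as n → ∞ to E(X_0 | X_{−N}^{−1}). -/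
open MeasureTheory Filter
open scoped Classical

section Birkhoff

variable {α : Type*} [MeasurableSpace α] {μ : Measure α} [IsProbabilityMeasure μ]


private lemma maximal_ergodic {T : α → α} (hT : MeasurePreserving T μ μ)
    {f : α → ℝ} (hf : Measurable f) {C : ℝ} (hC : ∀ x, |f x| ≤ C)
    (h : ∀ᵐ x ∂μ, ∃ n, 1 ≤ n ∧ 0 < ∑ k ∈ Finset.range n, f (T^[k] x)) :
    0 ≤ ∫ x, f x ∂μ := by
  rcases isEmpty_or_nonempty α with hα | hα
  · exact absurd (measure_univ (μ := μ)) (by simp [Set.univ_eq_empty_iff.mpr hα])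
  have hC0 : 0 ≤ C := (abs_nonneg _).trans (hC hα.some)
  set S : ℕ → α → ℝ := fun n x => ∑ k ∈ Finset.range n, f (T^[k] x) with hS
  have hSmeas : ∀ n, Measurable (S n) := fun n =>
    Finset.measurable_sum _ (fun k _ => hf.comp (hT.measurable.iterate k))
  have hS0 : ∀ x, S 0 x = 0 := fun x => by simp [hS]
  have hSrec : ∀ n x, S (n + 1) x = f x + S n (T x) := by
    intro n x
    rw [hS]
    simp only [Finset.sum_range_succ']
    simp [Function.iterate_succ_apply]
    ring
  have hSbound : ∀ n x, |S n x| ≤ n * C := by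
    intro n x
    calc |S n x| ≤ ∑ k ∈ Finset.range n, |f (T^[k] x)| := Finset.abs_sum_le_sum_abs _ _
      _ ≤ ∑ _k ∈ Finset.range n, C := Finset.sum_le_sum (fun k _ => hC _)
      _ = n * C := by simp [mul_comm]
  set M : ℕ → α → ℝ := fun N => Nat.rec (fun _ => (0:ℝ)) (fun n Mn x => S (n + 1) x ⊔ Mn x) N
    with hM
  have hM0 : ∀ x, M 0 x = 0 := fun x => rfl
  have hMrec : ∀ N x, M (N + 1) x = S (N + 1) x ⊔ M N x := fun N x => rfl
  have hMmeas : ∀ N, Measurable (M N) := by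
    intro N
    induction N with
    | zero => exact measurable_const
    | succ N ih =>
        have : M (N + 1) = fun x => S (N + 1) x ⊔ M N x := funext (hMrec N)
        rw [this]; exact (hSmeas (N + 1)).max ih
  have hMnonneg : ∀ N x, 0 ≤ M N x := by
    intro N
    induction N with
    | zero => intro x; exact le_of_eq (hM0 x).symm
    | succ N ih => intro x; rw [hMrec]; exact le_sup_of_le_right (ih x)
  have hMmono : ∀ N x, M N x ≤ M (N + 1) x := by
    intro N x; rw [hMrec]; exact le_sup_right
  have hSleM : ∀ N n x, n ≤ N → S n x ≤ M N x := by
    intro N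
    induction N with
    | zero => intro n x hn
              interval_cases n
              exact le_of_eq ((hS0 x).trans (hM0 x).symm)
    | succ N ih =>
        intro n x hn
        rcases Nat.lt_or_ge n (N + 1) with h1 | h1
        · exact (ih n x (by omega)).trans (hMmono N x)
        · have : n = N + 1 := by omega
          subst this
          rw [hMrec]; exact le_sup_left
  have hMbound : ∀ N x, |M N x| ≤ (N + 1) * C := by
    intro N
    induction N with
    | zero => intro x; rw [hM0]; simpa using hC0
    | succ N ih =>
        intro x
        rw [abs_of_nonneg (hMnonneg (N + 1) x), hMrec]
        have h1 := (abs_le.mp (hSbound (N + 1) x)).2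
        have h2 := (abs_le.mp (ih x)).2
        push_cast at h1 ⊢
        rw [sup_le_iff]
        constructor <;> nlinarith [hC0]
  have key : ∀ N x, 0 < M N x → M N x ≤ f x + M N (T x) := by
    intro N
    induction N with
    | zero => intro x hx; rw [hM0] at hx; exact absurd hx (lt_irrefl 0)
    | succ N ih =>
        intro x hx
        rw [hMrec] at hx ⊢
        rcases le_total (S (N + 1) x) (M N x) with h1 | h1
        · rw [sup_eq_right.mpr h1] at hx ⊢
          exact (ih x hx).trans (by have := hMmono N (T x); linarith)
        · rw [sup_eq_left.mpr h1]
          rw [hSrec N x]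
          have := hSleM (N + 1) N (T x) (by omega)
          linarith
  have hfint : Integrable f μ := Integrable.mono' (integrable_const C)
    hf.aestronglyMeasurable (Eventually.of_forall fun x => by
      rw [Real.norm_eq_abs]; exact hC x)
  have hMint : ∀ N, Integrable (M N) μ := fun N => Integrable.mono' (integrable_const ((N+1)*C))
    (hMmeas N).aestronglyMeasurable (Eventually.of_forall fun x => by
      rw [Real.norm_eq_abs]; exact hMbound N x)
  have hMTint : ∀ N, Integrable (fun x => M N (T x)) μ := fun N =>
    Integrable.mono' (integrable_const ((N+1)*C))
      ((hMmeas N).comp hT.measurable).aestronglyMeasurable (Eventually.of_forall fun x => by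
        rw [Real.norm_eq_abs]; exact hMbound N (T x))
  have hMTeq : ∀ N, ∫ x, M N (T x) ∂μ = ∫ x, M N x ∂μ := by
    intro N
    conv_rhs => rw [← hT.map_eq]
    rw [integral_map hT.measurable.aemeasurable (hMmeas N).aestronglyMeasurable]
  set E : ℕ → Set α := fun N => {x | 0 < M N x} with hE
  have hEmeas : ∀ N, MeasurableSet (E N) := fun N =>
    measurableSet_lt measurable_const (hMmeas N)
  have hEmono : Monotone E := monotone_nat_of_le_succ (by
    intro N x hx
    have : M N x ≤ M (N + 1) x := by rw [hMrec]; exact le_sup_right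
    exact lt_of_lt_of_le hx this)
  have hstep : ∀ N, 0 ≤ ∫ x in E N, f x ∂μ := by
    intro N
    have h1 : ∫ x in E N, (M N x - M N (T x)) ∂μ ≤ ∫ x in E N, f x ∂μ :=
      setIntegral_mono_on ((hMint N).sub (hMTint N)).integrableOn hfint.integrableOn (hEmeas N)
        (fun x hx => by have := key N x hx; linarith)
    have h2 : ∫ x in E N, (M N x - M N (T x)) ∂μ
        = ∫ x in E N, M N x ∂μ - ∫ x in E N, M N (T x) ∂μ :=
      integral_sub (hMint N).integrableOn (hMTint N).integrableOn
    have h3 : ∫ x in E N, M N x ∂μ = ∫ x, M N x ∂μ := by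
      have hc : ∫ x in (E N)ᶜ, M N x ∂μ = 0 := by
        rw [setIntegral_congr_fun (hEmeas N).compl (g := fun _ => (0:ℝ))
          (fun x hx => le_antisymm (not_lt.mp hx) (hMnonneg N x))]
        simp
      have := integral_add_compl (hEmeas N) (hMint N)
      linarith
    have h4 : ∫ x in E N, M N (T x) ∂μ ≤ ∫ x, M N (T x) ∂μ :=
      setIntegral_le_integral (hMTint N) (Eventually.of_forall fun x => hMnonneg N (T x))
    have h5 := hMTeq N
    linarith
  set U : Set α := ⋃ N, E N with hU
  have hUmeas : MeasurableSet U := MeasurableSet.iUnion hEmeas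
  have hUfull : μ Uᶜ = 0 := by
    rw [measure_eq_zero_iff_ae_notMem]
    filter_upwards [h] with x hx
    obtain ⟨n, hn1, hn2⟩ := hx
    intro hxc
    apply hxc
    have : S n x ≤ M n x := hSleM n n x le_rfl
    exact Set.mem_iUnion.mpr ⟨n, lt_of_lt_of_le hn2 this⟩
  have hUint : ∫ x in U, f x ∂μ = ∫ x, f x ∂μ := by
    have h1 := integral_add_compl hUmeas hfint
    have h2 : ∫ x in Uᶜ, f x ∂μ = 0 := by
      have : μ.restrict Uᶜ = 0 := Measure.restrict_eq_zero.mpr hUfull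
      rw [this]; exact integral_zero_measure f
    linarith
  have htends : Tendsto (fun N => ∫ x in E N, f x ∂μ) atTop (nhds (∫ x in U, f x ∂μ)) :=
    tendsto_setIntegral_of_monotone hEmeas hEmono hfint.integrableOn
  have : 0 ≤ ∫ x in U, f x ∂μ := ge_of_tendsto htends (Eventually.of_forall hstep)
  rwa [hUint] at this

private lemma birkhoff_upper {T : α → α} (hT : Ergodic T μ)
    {f : α → ℝ} (hf : Measurable f) {C : ℝ} (hC : ∀ x, |f x| ≤ C) :
    ∀ᵐ x ∂μ, ∀ k : ℕ, ∀ᶠ n in atTop,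
      (∑ j ∈ Finset.range n, f (T^[j] x)) / (n : ℝ) < ∫ y, f y ∂μ + 1 / ((k : ℝ) + 1) := by
  rcases isEmpty_or_nonempty α with hα | hα
  · exact absurd (measure_univ (μ := μ)) (by simp [Set.univ_eq_empty_iff.mpr hα])
  have hC0 : 0 ≤ C := (abs_nonneg _).trans (hC hα.some)
  set I := ∫ y, f y ∂μ with hI
  set S : ℕ → α → ℝ := fun n x => ∑ j ∈ Finset.range n, f (T^[j] x) with hS
  have hSmeas : ∀ n, Measurable (S n) := fun n =>
    Finset.measurable_sum _ (fun k _ => hf.comp (hT.toMeasurePreserving.measurable.iterate k))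
  have hS0 : ∀ x, S 0 x = 0 := fun x => by simp [hS]
  have hSrec : ∀ n x, S (n + 1) x = f x + S n (T x) := by
    intro n x
    rw [hS]
    simp only [Finset.sum_range_succ']
    simp [Function.iterate_succ_apply]
    ring
  have hSbound : ∀ n x, |S n x| ≤ n * C := by
    intro n x
    calc |S n x| ≤ ∑ k ∈ Finset.range n, |f (T^[k] x)| := Finset.abs_sum_le_sum_abs _ _
      _ ≤ ∑ _k ∈ Finset.range n, C := Finset.sum_le_sum (fun k _ => hC _)
      _ = n * C := by simp [mul_comm]
  set u : ℕ → α → ℝ := fun n x => S n x / n with hu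
  have humeas : ∀ n, Measurable (u n) := fun n => (hSmeas n).div_const _
  have hubound : ∀ n x, |u n x| ≤ C := by
    intro n x
    rcases Nat.eq_zero_or_pos n with rfl | hn
    · simp [hu, hS0]; exact hC0
    · have hn0 : (0:ℝ) < n := by exact_mod_cast hn
      rw [hu, abs_div, abs_of_nonneg hn0.le, div_le_iff₀ hn0]
      calc |S n x| ≤ n * C := hSbound n x
        _ = C * n := mul_comm _ _
  have hest : ∀ x m, 1 ≤ m → |u m (T x) - u (m + 1) x| ≤ 2 * C / m := by
    intro x m hm
    have hm0 : (0:ℝ) < m := by exact_mod_cast hm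
    have h1 : S m (T x) = S (m + 1) x - f x := by rw [hSrec]; ring
    have h2 : u m (T x) - u (m + 1) x = (u (m + 1) x - f x) / m := by
      rw [hu]; simp only; rw [h1]
      field_simp
      push_cast; ring
    rw [h2, abs_div, abs_of_nonneg hm0.le]
    gcongr
    have h3 := abs_le.mp (hubound (m + 1) x)
    have h4 := abs_le.mp (hC x)
    rw [abs_le]
    constructor <;> linarith [h3.1, h3.2, h4.1, h4.2]
  rw [ae_all_iff]
  intro k
  set ε : ℝ := 1 / ((k : ℝ) + 1) with hε
  have hε0 : 0 < ε := by positivity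
  set c : ℝ := I + ε with hc
  set B : Set α := {x | ∀ q : ℚ, (q:ℝ) < c → ∀ N : ℕ, ∃ n, N ≤ n ∧ (q:ℝ) < u n x} with hB
  have hBmeas : MeasurableSet B := by
    have hBeq : B = ⋂ (q : ℚ), ⋂ (_ : (q:ℝ) < c), ⋂ (N : ℕ), ⋃ (n : ℕ), ⋃ (_ : N ≤ n),
        {x | (q:ℝ) < u n x} := by
      ext x
      simp [hB]
    rw [hBeq]
    exact MeasurableSet.iInter fun q => MeasurableSet.iInter fun _ =>
      MeasurableSet.iInter fun N => MeasurableSet.iUnion fun n =>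
      MeasurableSet.iUnion fun _ => measurableSet_lt measurable_const (humeas n)
  have hBinv : T ⁻¹' B = B := by
    ext x
    simp only [Set.mem_preimage, hB, Set.mem_setOf_eq]
    constructor
    · intro hTx q hq N
      obtain ⟨q', hq1, hq2⟩ := exists_rat_btwn hq
      have hδ0 : (0:ℝ) < (q':ℝ) - q := by linarith
      obtain ⟨K, hK⟩ := exists_nat_gt (2 * C / ((q':ℝ) - q))
      obtain ⟨m, hm1, hm2⟩ := hTx q' hq2 (max (max N 1) (K + 1))
      have hmN : N ≤ m := le_trans (le_trans (le_max_left N 1) (le_max_left _ _)) hm1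
      have hm1' : 1 ≤ m := le_trans (le_trans (le_max_right N 1) (le_max_left _ _)) hm1
      have hmK : K + 1 ≤ m := le_trans (le_max_right _ _) hm1
      have hm0 : (0:ℝ) < m := by exact_mod_cast hm1'
      have hKm : 2 * C / m < (q':ℝ) - q := by
        rw [div_lt_iff₀ hm0]
        have h5 : (K:ℝ) < m := by exact_mod_cast (by omega : K < m)
        have h6 : 2 * C < K * ((q':ℝ) - q) := by
          rw [div_lt_iff₀ hδ0] at hK
          linarith
        nlinarith
      refine ⟨m + 1, by omega, ?_⟩
      have h7 := abs_le.mp (hest x m hm1')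
      linarith [h7.1, h7.2, hm2]
    · intro hx q hq N
      obtain ⟨q', hq1, hq2⟩ := exists_rat_btwn hq
      have hδ0 : (0:ℝ) < (q':ℝ) - q := by linarith
      obtain ⟨K, hK⟩ := exists_nat_gt (2 * C / ((q':ℝ) - q))
      obtain ⟨n, hn1, hn2⟩ := hx q' hq2 (max (max N 1) (K + 1) + 1)
      obtain ⟨m, rfl⟩ : ∃ m, n = m + 1 := ⟨n - 1, by omega⟩
      have hmN : N ≤ m := by
        have := le_trans (le_trans (le_max_left N 1) (le_max_left _ _)) (by omega : max (max N 1) (K+1) ≤ m)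
        omega
      have hm1' : 1 ≤ m := by
        have : max (max N 1) (K + 1) ≤ m := by omega
        have := le_trans (le_trans (le_max_right N 1) (le_max_left _ _)) this
        omega
      have hmK : K + 1 ≤ m := by
        have : max (max N 1) (K + 1) ≤ m := by omega
        exact le_trans (le_max_right _ _) this
      have hm0 : (0:ℝ) < m := by exact_mod_cast hm1'
      have hKm : 2 * C / m < (q':ℝ) - q := by
        rw [div_lt_iff₀ hm0]
        have h5 : (K:ℝ) < m := by exact_mod_cast (by omega : K < m)
        have h6 : 2 * C < K * ((q':ℝ) - q) := by
          rw [div_lt_iff₀ hδ0] at hK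
          linarith
        nlinarith
      refine ⟨m, hmN, ?_⟩
      have h7 := abs_le.mp (hest x m hm1')
      linarith [h7.1, h7.2, hn2]
  rcases hT.ae_empty_or_univ hBmeas hBinv with hB0 | hB1
  · -- B null: good case
    have hae : ∀ᵐ x ∂μ, x ∉ B := by
      rw [← measure_eq_zero_iff_ae_notMem, ← ae_eq_empty]
      exact hB0
    filter_upwards [hae] with x hx
    rw [hB, Set.mem_setOf_eq] at hx
    push_neg at hx
    obtain ⟨q, hq1, N, hq2⟩ := hx
    rw [eventually_atTop]
    exact ⟨N, fun n hn => lt_of_le_of_lt (hq2 n hn) hq1⟩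
  · -- B conull: contradiction with maximal ergodic theorem
    exfalso
    have hae : ∀ᵐ x ∂μ, x ∈ B := by
      rw [ae_eq_univ] at hB1
      rw [ae_iff]
      convert hB1 using 2
      rfl
    set g : α → ℝ := fun x => f x - (I + ε / 2) with hg
    have hgmeas : Measurable g := hf.sub measurable_const
    have hgbound : ∀ x, |g x| ≤ C + |I + ε / 2| := by
      intro x
      calc |g x| ≤ |f x| + |I + ε / 2| := abs_sub _ _
        _ ≤ C + |I + ε / 2| := by linarith [hC x]
    have hSg : ∀ n x, ∑ j ∈ Finset.range n, g (T^[j] x) = S n x - n * (I + ε / 2) := by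
      intro n x
      rw [hg, hS]
      simp only
      rw [Finset.sum_sub_distrib, Finset.sum_const, Finset.card_range, nsmul_eq_mul]
    have hmax := maximal_ergodic hT.toMeasurePreserving hgmeas hgbound ?_
    · have hfint : Integrable f μ := Integrable.mono' (integrable_const C)
        hf.aestronglyMeasurable (Eventually.of_forall fun x => by
          rw [Real.norm_eq_abs]; exact hC x)
      have : ∫ x, g x ∂μ = I - (I + ε / 2) := by
        rw [hg]
        rw [integral_sub hfint (integrable_const _)]
        simp [hI, measure_univ]
      rw [this] at hmax
      linarith
    · filter_upwards [hae] with x hx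
      rw [hB, Set.mem_setOf_eq] at hx
      obtain ⟨q, hq1, hq2⟩ := exists_rat_btwn (show I + ε / 2 < c by rw [hc]; linarith)
      obtain ⟨n, hn1, hn2⟩ := hx q hq2 1
      refine ⟨n, hn1, ?_⟩
      rw [hSg]
      have hn0 : (0:ℝ) < n := by exact_mod_cast hn1
      rw [hu] at hn2
      simp only at hn2
      rw [lt_div_iff₀ hn0] at hn2
      nlinarith

private lemma birkhoff_bdd {T : α → α} (hT : Ergodic T μ) {f : α → ℝ} (hf : Measurable f)
    {C : ℝ} (hC : ∀ x, |f x| ≤ C) :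
    ∀ᵐ x ∂μ, Tendsto (fun n : ℕ => (∑ j ∈ Finset.range n, f (T^[j] x)) / (n : ℝ)) atTop
      (nhds (∫ y, f y ∂μ)) := by
  have h1 := birkhoff_upper hT hf hC
  have h2 := birkhoff_upper hT (f := fun x => -f x) hf.neg (C := C)
    (fun x => by rw [abs_neg]; exact hC x)
  filter_upwards [h1, h2] with x hx1 hx2
  rw [Metric.tendsto_atTop]
  intro ε hε
  obtain ⟨k, hk⟩ := exists_nat_one_div_lt hε
  obtain ⟨N1, hN1⟩ := eventually_atTop.mp (hx1 k)
  obtain ⟨N2, hN2⟩ := eventually_atTop.mp (hx2 k)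
  refine ⟨max N1 N2, fun n hn => ?_⟩
  have e1 := hN1 n (le_trans (le_max_left _ _) hn)
  have e2 := hN2 n (le_trans (le_max_right _ _) hn)
  rw [show (∑ j ∈ Finset.range n, -f (T^[j] x)) = -(∑ j ∈ Finset.range n, f (T^[j] x))
      from by rw [Finset.sum_neg_distrib], integral_neg, neg_div] at e2
  rw [Real.dist_eq, abs_sub_lt_iff]
  constructor <;> linarith

end Birkhoff

private lemma div_div_div_same {a b m : ℝ} (hm : m ≠ 0) : (a / m) / (b / m) = a / b := by
  rcases eq_or_ne b 0 with rfl | hb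
  · simp
  · field_simp

private lemma ite_inst {α : Sort*} {p : Prop} (i1 i2 : Decidable p) (a b : α) :
    @ite α p i1 a b = @ite α p i2 a b := by
  rw [Subsingleton.elim i1 i2]

/-- For a stationary ergodic finite-valued process `X`, the pattern-matching
estimator converges a.s. to the conditional expectation `E(X_0 | X_{-N}^{-1})`. -/
theorem stmt10 {Ω : Type*} [MeasurableSpace Ω] (μ : Measure Ω) [IsProbabilityMeasure μ]
    (T : Ω → Ω) (hT : Ergodic T μ) (X : ℤ → Ω → ℝ)
    (hshift : ∀ i, X (i + 1) = X i ∘ T)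
    (hmeas : ∀ i, Measurable (X i))
    (s : Finset ℝ) (hval : ∀ i ω, X i ω ∈ s)
    (N : ℕ) (hN : 1 ≤ N) :
    ∀ᵐ ω ∂μ, Filter.Tendsto (fun n : ℕ =>
        (∑ j ∈ Finset.Icc 1 (n - N),
            if (∀ k ∈ Finset.Icc 1 N, X (-(j : ℤ) - (k : ℤ)) ω = X (-(k : ℤ)) ω)
            then X (-(j : ℤ)) ω else 0) /
        (∑ j ∈ Finset.Icc 1 (n - N),
            if (∀ k ∈ Finset.Icc 1 N, X (-(j : ℤ) - (k : ℤ)) ω = X (-(k : ℤ)) ω)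
            then (1 : ℝ) else 0))
      Filter.atTop
      (nhds ((μ[X 0 | MeasurableSpace.comap
          (fun ω (k : Finset.Icc 1 N) => X (-((k : ℕ) : ℤ)) ω) inferInstance]) ω)) := by
  -- basic bounds
  set C : ℝ := ∑ v ∈ s, |v| with hCdef
  have hCs : ∀ r ∈ s, |r| ≤ C := fun r hr =>
    Finset.single_le_sum (fun i _ => abs_nonneg i) hr
  have hXb : ∀ i ω, |X i ω| ≤ C := fun i ω => hCs _ (hval i ω)
  have hC0 : 0 ≤ C := Finset.sum_nonneg fun i _ => abs_nonneg i
  have hXT : ∀ i ω, X i (T ω) = X (i + 1) ω := fun i ω => (congrFun (hshift i) ω).symm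
  -- sequence space and shifts
  set φ : Ω → (ℤ → ℝ) := fun ω i => X i ω with hφdef
  have hφ : Measurable φ := measurable_pi_lambda _ (fun i => hmeas i)
  set σf : (ℤ → ℝ) → (ℤ → ℝ) := fun y i => y (i - 1) with hσfdef
  set σb : (ℤ → ℝ) → (ℤ → ℝ) := fun y i => y (i + 1) with hσbdef
  have hσf : Measurable σf := measurable_pi_lambda _ (fun i => measurable_pi_apply _)
  have hσb : Measurable σb := measurable_pi_lambda _ (fun i => measurable_pi_apply _)
  have hfb : σf ∘ σb = id := by
    funext y i
    simp [hσfdef, hσbdef]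
  have hcomm : σb ∘ φ = φ ∘ T := by
    funext ω i
    simp only [hσbdef, hφdef, Function.comp_apply]
    exact (hXT i ω).symm
  set ν : Measure (ℤ → ℝ) := Measure.map φ μ with hνdef
  haveI : IsProbabilityMeasure ν := Measure.isProbabilityMeasure_map hφ.aemeasurable
  have hνb : Measure.map σb ν = ν := by
    rw [hνdef, Measure.map_map hσb hφ, hcomm,
      ← Measure.map_map hφ hT.toMeasurePreserving.measurable, hT.toMeasurePreserving.map_eq]
  have hνf : MeasurePreserving σf ν ν := by
    refine ⟨hσf, ?_⟩
    conv_lhs => rw [← hνb]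
    rw [Measure.map_map hσf hσb, hfb, Measure.map_id]
  have herg : Ergodic σf ν := by
    refine ⟨hνf, ⟨fun A hA hAinv => ?_⟩⟩
    have hAinv2 : σb ⁻¹' A = A := by
      have h1 : σb ⁻¹' (σf ⁻¹' A) = A := by
        rw [← Set.preimage_comp, hfb, Set.preimage_id]
      rw [hAinv] at h1
      exact h1
    have hB : T ⁻¹' (φ ⁻¹' A) = φ ⁻¹' A := by
      calc T ⁻¹' (φ ⁻¹' A) = (φ ∘ T) ⁻¹' A := (Set.preimage_comp).symm
        _ = (σb ∘ φ) ⁻¹' A := by rw [hcomm]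
        _ = φ ⁻¹' (σb ⁻¹' A) := Set.preimage_comp
        _ = φ ⁻¹' A := by rw [hAinv2]
    rw [eventuallyConst_set']
    rcases hT.ae_empty_or_univ (hφ hA) hB with h0 | h1
    · left
      rw [ae_eq_empty] at h0 ⊢
      rw [hνdef, Measure.map_apply hφ hA]
      exact h0
    · right
      rw [ae_eq_univ] at h1 ⊢
      rw [hνdef, Measure.map_apply hφ hA.compl, Set.preimage_compl]
      exact h1
  -- iterates of the backward shift
  have hiter : ∀ (i : ℕ) (y : ℤ → ℝ) (c : ℤ), σf^[i] y c = y (c - i) := by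
    intro i
    induction i with
    | zero => intro y c; simp
    | succ i ih =>
        intro y c
        rw [Function.iterate_succ_apply, ih]
        show y (c - i - 1) = y (c - (i + 1 : ℕ))
        congr 1
        push_cast
        ring
  -- patterns
  have hωAx : ∀ ω (k : Finset.Icc 1 N), X (-((k : ℕ) : ℤ)) ω ∈ s := fun ω k => hval _ ω
  set Q := ((Finset.Icc 1 N : Finset ℕ) → {v // v ∈ s}) with hQdef
  set xs : Ω → Q := fun ω k => ⟨X (-((k : ℕ) : ℤ)) ω, hval _ ω⟩ with hxsdef
  set Ax : Q → Set Ω := fun x => {ω | ∀ k : Finset.Icc 1 N, X (-((k : ℕ) : ℤ)) ω = (x k : ℝ)}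
    with hAxdef
  have hAxm : ∀ x, MeasurableSet (Ax x) := by
    intro x
    have : Ax x = ⋂ k : Finset.Icc 1 N, (X (-((k : ℕ) : ℤ))) ⁻¹' {(x k : ℝ)} := by
      ext ω; simp [hAxdef]
    rw [this]
    exact MeasurableSet.iInter fun k => (hmeas _) (measurableSet_singleton _)
  have hmemAx : ∀ ω, ω ∈ Ax (xs ω) := by
    intro ω k
    rfl
  have hAxdisj : ∀ (x x' : Q) (ω : Ω), ω ∈ Ax x → ω ∈ Ax x' → x = x' := by
    intro x x' ω h1 h2
    funext k
    exact Subtype.ext ((h1 k).symm.trans (h2 k))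
  -- functions on sequence space
  set D : Q → Set (ℤ → ℝ) :=
    fun x => {y | ∀ k : Finset.Icc 1 N, y (-1 - ((k : ℕ) : ℤ)) = (x k : ℝ)} with hDdef
  have hDm : ∀ x, MeasurableSet (D x) := by
    intro x
    have : D x = ⋂ k : Finset.Icc 1 N,
        (fun y : ℤ → ℝ => y (-1 - ((k : ℕ) : ℤ))) ⁻¹' {(x k : ℝ)} := by
      ext y; simp [hDdef]
    rw [this]
    exact MeasurableSet.iInter fun k => (measurable_pi_apply _) (measurableSet_singleton _)
  set cl : ℝ → ℝ := fun t => max (-C) (min C t) with hcldef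
  have hclm : Measurable cl :=
    Measurable.max measurable_const (Measurable.min measurable_const measurable_id)
  have hclb : ∀ t, |cl t| ≤ C := by
    intro t
    rw [abs_le]
    constructor
    · exact le_max_left _ _
    · exact max_le (by linarith) (min_le_left _ _)
  have hcls : ∀ r ∈ s, cl r = r := by
    intro r hr
    have h1 : r ≤ C := (le_abs_self r).trans (hCs r hr)
    have h2 : -C ≤ r := by
      have := (hCs r hr)
      have := neg_abs_le r
      linarith
    rw [hcldef]
    simp only
    rw [min_eq_right h1, max_eq_right h2]
  set gnum : Q → (ℤ → ℝ) → ℝ := fun x y => if y ∈ D x then cl (y (-1)) else 0 with hgnumdef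
  set gden : Q → (ℤ → ℝ) → ℝ := fun x y => if y ∈ D x then (1 : ℝ) else 0 with hgdendef
  have hgnm : ∀ x, Measurable (gnum x) := fun x =>
    Measurable.ite (hDm x) (hclm.comp (measurable_pi_apply (-1))) measurable_const
  have hgdm : ∀ x, Measurable (gden x) := fun x =>
    Measurable.ite (hDm x) measurable_const measurable_const
  have hgnb : ∀ x y, |gnum x y| ≤ C := by
    intro x y
    rw [hgnumdef]
    simp only
    split_ifs
    · exact hclb _
    · simpa using hC0
  have hgdb : ∀ x y, |gden x y| ≤ 1 := by
    intro x y
    rw [hgdendef]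
    simp only
    split_ifs <;> simp
  -- Birkhoff limits
  have hBae : ∀ᵐ y ∂ν, ∀ x : Q,
      Tendsto (fun M : ℕ => (∑ j ∈ Finset.range M, gnum x (σf^[j] y)) / (M : ℝ)) atTop
        (nhds (∫ z, gnum x z ∂ν)) ∧
      Tendsto (fun M : ℕ => (∑ j ∈ Finset.range M, gden x (σf^[j] y)) / (M : ℝ)) atTop
        (nhds (∫ z, gden x z ∂ν)) := by
    rw [ae_all_iff]
    intro x
    exact (birkhoff_bdd herg (hgnm x) (hgnb x)).and (birkhoff_bdd herg (hgdm x) (hgdb x))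
  have hBμ : ∀ᵐ ω ∂μ, ∀ x : Q,
      Tendsto (fun M : ℕ => (∑ j ∈ Finset.range M, gnum x (σf^[j] (φ ω))) / (M : ℝ)) atTop
        (nhds (∫ z, gnum x z ∂ν)) ∧
      Tendsto (fun M : ℕ => (∑ j ∈ Finset.range M, gden x (σf^[j] (φ ω))) / (M : ℝ)) atTop
        (nhds (∫ z, gden x z ∂ν)) := ae_of_ae_map hφ.aemeasurable hBae
  -- identify the integrals
  have hDb : ∀ (x : Q) (ω : Ω), (φ (T ω) ∈ D x) ↔ ω ∈ Ax x := by
    intro x ω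
    have hidx : ∀ k : Finset.Icc 1 N, (-1 - ((k : ℕ) : ℤ)) + 1 = -((k : ℕ) : ℤ) := by
      intro k; ring
    constructor
    · intro h k
      have := h k
      rw [hφdef] at this
      simp only at this
      rw [hXT] at this
      rwa [hidx k] at this
    · intro h k
      have := h k
      rw [hφdef]
      simp only
      rw [hXT, hidx k]
      exact this
  have hval1 : ∀ ω, φ (T ω) (-1) = X 0 ω := by
    intro ω
    rw [hφdef]
    simp only
    rw [hXT]
    norm_num
  have hInum : ∀ x : Q, ∫ z, gnum x z ∂ν = ∫ ω, (if ω ∈ Ax x then X 0 ω else 0) ∂μ := by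
    intro x
    rw [hνdef, integral_map hφ.aemeasurable (hgnm x).aestronglyMeasurable]
    have step : ∫ ω, gnum x (φ ω) ∂μ = ∫ ω, gnum x (φ (T ω)) ∂μ := by
      conv_lhs => rw [← hT.toMeasurePreserving.map_eq]
      rw [integral_map hT.toMeasurePreserving.measurable.aemeasurable
        ((show Measurable fun ω => gnum x (φ ω) from (hgnm x).comp hφ).aestronglyMeasurable)]
    rw [step]
    apply integral_congr_ae
    apply Eventually.of_forall
    intro ω
    by_cases h : ω ∈ Ax x
    · rw [hgnumdef]
      simp only
      rw [if_pos ((hDb x ω).mpr h), if_pos h, hval1, hcls _ (hval 0 ω)]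
    · rw [hgnumdef]
      simp only
      rw [if_neg (fun hc => h ((hDb x ω).mp hc)), if_neg h]
  have hIden : ∀ x : Q, ∫ z, gden x z ∂ν = (μ (Ax x)).toReal := by
    intro x
    rw [hνdef, integral_map hφ.aemeasurable (hgdm x).aestronglyMeasurable]
    have step : ∫ ω, gden x (φ ω) ∂μ = ∫ ω, gden x (φ (T ω)) ∂μ := by
      conv_lhs => rw [← hT.toMeasurePreserving.map_eq]
      rw [integral_map hT.toMeasurePreserving.measurable.aemeasurable
        ((show Measurable fun ω => gden x (φ ω) from (hgdm x).comp hφ).aestronglyMeasurable)]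
    rw [step]
    have : (fun ω => gden x (φ (T ω))) = (Ax x).indicator (fun _ => (1:ℝ)) := by
      funext ω
      rw [Set.indicator_apply, hgdendef]
      simp only
      by_cases h : ω ∈ Ax x
      · rw [if_pos ((hDb x ω).mpr h), if_pos h]
      · rw [if_neg (fun hc => h ((hDb x ω).mp hc)), if_neg h]
    rw [this, integral_indicator_const _ (hAxm x)]
    simp
    rfl
  -- conditional expectation
  haveI : Fintype Q := inferInstanceAs (Fintype ((Finset.Icc 1 N : Finset ℕ) → {v // v ∈ s}))
  set π : Ω → (Finset.Icc 1 N → ℝ) := fun ω (k : Finset.Icc 1 N) => X (-((k : ℕ) : ℤ)) ω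
    with hπdef
  have hπ : Measurable π := measurable_pi_lambda _ (fun k => hmeas _)
  have hm : MeasurableSpace.comap π inferInstance ≤ (inferInstance : MeasurableSpace Ω) :=
    hπ.comap_le
  have hsingleton : ∀ x : Q,
      MeasurableSet ({fun k => (x k : ℝ)} : Set (Finset.Icc 1 N → ℝ)) := by
    intro x
    rw [← Set.univ_pi_singleton (fun k => (x k : ℝ))]
    exact MeasurableSet.univ_pi (fun k => measurableSet_singleton _)
  have hAxm' : ∀ x : Q, MeasurableSet[MeasurableSpace.comap π inferInstance] (Ax x) := by
    intro x
    refine ⟨{fun k => (x k : ℝ)}, hsingleton x, ?_⟩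
    ext ω
    simp only [Set.mem_preimage, Set.mem_singleton_iff, hAxdef, Set.mem_setOf_eq, hπdef,
      funext_iff]
  set Jn : Q → ℝ := fun x => ∫ ω, (if ω ∈ Ax x then X 0 ω else 0) ∂μ with hJdef
  set cx : Q → ℝ := fun x => Jn x / (μ (Ax x)).toReal with hcxdef
  set G : Ω → ℝ := fun ω => ∑ x : Q, Set.indicator (Ax x) (fun _ => cx x) ω with hGdef
  have hGval : ∀ ω (x : Q), ω ∈ Ax x → G ω = cx x := by
    intro ω x hx
    rw [hGdef]
    simp only
    rw [Finset.sum_eq_single x]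
    · exact Set.indicator_of_mem hx _
    · intro b _ hb
      exact Set.indicator_of_notMem (fun hb' => hb (hAxdisj b x ω hb' hx)) _
    · intro hx'
      exact absurd (Finset.mem_univ x) hx'
  have hXint : Integrable (X 0) μ := Integrable.mono' (integrable_const C)
    (hmeas 0).aestronglyMeasurable (Eventually.of_forall fun ω => by
      rw [Real.norm_eq_abs]; exact hXb 0 ω)
  have hGint : Integrable G μ := integrable_finset_sum _
    (fun x _ => (integrable_const (cx x)).indicator (hAxm x))
  have hJeq : ∀ x : Q, Jn x = ∫ ω in Ax x, X 0 ω ∂μ := by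
    intro x
    rw [hJdef]
    simp only
    rw [← integral_indicator (hAxm x)]
    congr 1
    funext ω
    rw [Set.indicator_apply]
  have hsetG : ∀ x : Q, ∫ ω in Ax x, G ω ∂μ = ∫ ω in Ax x, X 0 ω ∂μ := by
    intro x
    rcases eq_or_ne (μ (Ax x)) 0 with h0 | h0
    · rw [Measure.restrict_eq_zero.mpr h0]
      simp
    · have h1 : ∫ ω in Ax x, G ω ∂μ = (μ (Ax x)).toReal • cx x := by
        rw [setIntegral_congr_fun (hAxm x) (fun ω hω => hGval ω x hω)]
        exact setIntegral_const _
      rw [h1, smul_eq_mul, hcxdef]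
      simp only
      rw [mul_comm, div_mul_cancel₀ _ (ENNReal.toReal_ne_zero.mpr ⟨h0, measure_ne_top μ _⟩)]
      exact hJeq x
  have hcond : G =ᵐ[μ] μ[X 0 | MeasurableSpace.comap π inferInstance] := by
    refine ae_eq_condExp_of_forall_setIntegral_eq hm hXint
      (fun S hS _ => hGint.integrableOn) ?_ ?_
    · intro S hS _
      obtain ⟨B, hB, rfl⟩ := hS
      have hmeasB : MeasurableSet (π ⁻¹' B) := hπ hB
      have hcover : π ⁻¹' B = ⋃ x ∈ (Finset.univ : Finset Q), (Ax x ∩ π ⁻¹' B) := by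
        ext ω
        simp only [Set.mem_iUnion, Set.mem_inter_iff, Finset.mem_univ, true_and,
          exists_and_left]
        constructor
        · intro hω
          exact ⟨xs ω, hmemAx ω, trivial, hω⟩
        · rintro ⟨x, hx, -, hω⟩
          exact hω
      have hdisj : (↑(Finset.univ : Finset Q) : Set Q).Pairwise
          (Function.onFun Disjoint (fun x => Ax x ∩ π ⁻¹' B)) := by
        intro a _ b _ hab
        rw [Function.onFun]
        apply Set.disjoint_left.mpr
        rintro ω ⟨ha, -⟩ ⟨hb, -⟩
        exact hab (hAxdisj a b ω ha hb)
      rw [hcover,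
        integral_biUnion_finset _ (fun x _ => (hAxm x).inter hmeasB) hdisj
          (fun x _ => hGint.integrableOn),
        integral_biUnion_finset _ (fun x _ => (hAxm x).inter hmeasB) hdisj
          (fun x _ => hXint.integrableOn)]
      refine Finset.sum_congr rfl (fun x _ => ?_)
      rcases Classical.em ((fun k => (x k : ℝ)) ∈ B) with hxB | hxB
      · have hinter : Ax x ∩ π ⁻¹' B = Ax x := by
          apply Set.inter_eq_self_of_subset_left
          intro ω hω
          have hπω : π ω = fun k => (x k : ℝ) := funext (fun k => hω k)
          rw [Set.mem_preimage, hπω]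
          exact hxB
        rw [hinter]
        exact hsetG x
      · have hinter : Ax x ∩ π ⁻¹' B = ∅ := by
          ext ω
          simp only [Set.mem_inter_iff, Set.mem_empty_iff_false, iff_false, not_and]
          intro hω hωB
          apply hxB
          have hπω : π ω = fun k => (x k : ℝ) := funext (fun k => hω k)
          rw [← hπω]
          exact hωB
        rw [hinter]
        simp
    · refine ⟨G, ?_, EventuallyEq.rfl⟩
      apply Measurable.stronglyMeasurable
      exact Finset.measurable_sum _ (fun x _ =>
        Measurable.indicator measurable_const (hAxm' x))
  have hpos : ∀ᵐ ω ∂μ, μ (Ax (xs ω)) ≠ 0 := by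
    have hnull : μ (⋃ x ∈ {x : Q | μ (Ax x) = 0}, Ax x) = 0 :=
      (measure_biUnion_null_iff (Set.to_countable _)).mpr (fun x hx => hx)
    rw [measure_eq_zero_iff_ae_notMem] at hnull
    filter_upwards [hnull] with ω hω h0
    exact hω (Set.mem_biUnion h0 (hmemAx ω))
  -- pointwise sum identification
  have happ : ∀ (i : ℕ) (ω : Ω) (c : ℤ), σf^[i] (φ ω) c = X (c - i) ω := by
    intro i ω c
    rw [hiter, hφdef]
  have hterm : ∀ (ω : Ω) (i : ℕ),
      (gnum (xs ω) (σf^[i] (φ ω)) =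
        (if (∀ k ∈ Finset.Icc 1 N, X (-((1 + i : ℕ) : ℤ) - (k : ℤ)) ω = X (-(k : ℤ)) ω)
          then X (-((1 + i : ℕ) : ℤ)) ω else 0))
      ∧ (gden (xs ω) (σf^[i] (φ ω)) =
        (if (∀ k ∈ Finset.Icc 1 N, X (-((1 + i : ℕ) : ℤ) - (k : ℤ)) ω = X (-(k : ℤ)) ω)
          then (1 : ℝ) else 0)) := by
    intro ω i
    have hmem : (σf^[i] (φ ω) ∈ D (xs ω)) ↔
        (∀ k ∈ Finset.Icc 1 N, X (-((1 + i : ℕ) : ℤ) - (k : ℤ)) ω = X (-(k : ℤ)) ω) := by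
      rw [hDdef]
      simp only [Set.mem_setOf_eq]
      constructor
      · intro h k hk
        have h2 := h ⟨k, hk⟩
        rw [happ] at h2
        have e : (-((1 + i : ℕ) : ℤ) - (k : ℤ)) = (-1 - (k : ℤ) - (i : ℤ)) := by
          push_cast; ring
        rw [e]
        exact h2
      · intro h k
        have h2 := h (k : ℕ) k.2
        rw [happ]
        have e : (-((1 + i : ℕ) : ℤ) - ((k : ℕ) : ℤ)) = (-1 - ((k : ℕ) : ℤ) - (i : ℤ)) := by
          push_cast; ring
        rw [e] at h2
        exact h2
    have hv : σf^[i] (φ ω) (-1) = X (-((1 + i : ℕ) : ℤ)) ω := by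
      rw [happ]
      congr 1
      push_cast
      ring
    constructor
    · rw [hgnumdef]
      simp only
      by_cases h : σf^[i] (φ ω) ∈ D (xs ω)
      · rw [if_pos h, if_pos (hmem.mp h), hv, hcls _ (hval _ ω)]
      · rw [if_neg h, if_neg (fun hc => h (hmem.mpr hc))]
    · rw [hgdendef]
      simp only
      by_cases h : σf^[i] (φ ω) ∈ D (xs ω)
      · rw [if_pos h, if_pos (hmem.mp h)]
      · rw [if_neg h, if_neg (fun hc => h (hmem.mpr hc))]
  have hsum : ∀ (ω : Ω) (M : ℕ),
      ((∑ j ∈ Finset.Icc 1 M, @ite ℝ (∀ k ∈ Finset.Icc 1 N,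
          X (-(j : ℤ) - (k : ℤ)) ω = X (-(k : ℤ)) ω) (Classical.propDecidable _)
          (X (-(j : ℤ)) ω) 0)
        = ∑ j ∈ Finset.range M, gnum (xs ω) (σf^[j] (φ ω)))
      ∧ ((∑ j ∈ Finset.Icc 1 M, @ite ℝ (∀ k ∈ Finset.Icc 1 N,
          X (-(j : ℤ) - (k : ℤ)) ω = X (-(k : ℤ)) ω) (Classical.propDecidable _)
          (1 : ℝ) 0)
        = ∑ j ∈ Finset.range M, gden (xs ω) (σf^[j] (φ ω))) := by
    intro ω M
    constructor
    · rw [← Finset.Ico_add_one_right_eq_Icc, Finset.sum_Ico_eq_sum_range]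
      simp only [Nat.add_sub_cancel]
      exact Finset.sum_congr rfl (fun i _ => (ite_inst _ _ _ _).trans ((hterm ω i).1).symm)
    · rw [← Finset.Ico_add_one_right_eq_Icc, Finset.sum_Ico_eq_sum_range]
      simp only [Nat.add_sub_cancel]
      exact Finset.sum_congr rfl (fun i _ => (ite_inst _ _ _ _).trans ((hterm ω i).2).symm)
  -- final assembly
  filter_upwards [hBμ, hpos, hcond] with ω hω1 hω2 hω3
  obtain ⟨hnum, hden⟩ := hω1 (xs ω)
  rw [hInum (xs ω)] at hnum
  rw [hIden (xs ω)] at hden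
  have hp : 0 < (μ (Ax (xs ω))).toReal := ENNReal.toReal_pos hω2 (measure_ne_top μ _)
  have hdiv := Tendsto.div hnum hden hp.ne'
  have hratio : Tendsto (fun M : ℕ =>
      (∑ j ∈ Finset.range M, gnum (xs ω) (σf^[j] (φ ω))) /
      (∑ j ∈ Finset.range M, gden (xs ω) (σf^[j] (φ ω)))) atTop (nhds (cx (xs ω))) := by
    have heq : cx (xs ω)
        = (∫ ω', (if ω' ∈ Ax (xs ω) then X 0 ω' else 0) ∂μ) / (μ (Ax (xs ω))).toReal := by
      rw [hcxdef, hJdef]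
    rw [heq]
    apply Tendsto.congr' _ hdiv
    filter_upwards [eventually_ge_atTop 1] with M hM
    have hM0 : (M : ℝ) ≠ 0 := Nat.cast_ne_zero.mpr (by omega)
    exact div_div_div_same hM0
  have hcomp := hratio.comp (tendsto_sub_atTop_nat N)
  have hval2 : (μ[X 0 | MeasurableSpace.comap π inferInstance]) ω = cx (xs ω) := hω3.symm.trans (hGval ω (xs ω) (hmemAx ω))
  rw [hval2]
  apply Tendsto.congr _ hcomp
  intro n
  rw [(hsum ω (n - N)).1, (hsum ω (n - N)).2]
  rfl
end

section
/- For the binary odometer T on [0,1), the sets B_{2^{k−2}+l} := I^k_{2^{k−1}−2l} (for k ≥ 2, 1 ≤ l ≤ 2^{k−2}) satisfy: T^0 B_m, T^{-1} B_m, ..., T^{-m} B_m are pairwise disjoint, where m = 2^{k−2}+l, because T^{-j} I^k_{2^{k−1}−2l} = I^k_{2^{k−1}−2l+j} for 0 ≤ j ≤ m. -/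
open MeasureTheory Filter Set
open scoped symmDiff

lemma bit_lt_two (i : ℕ) (r : ℝ) : bit i r < 2 := Nat.mod_lt _ two_pos

lemma bit_of_nonpos {r : ℝ} (hr : r ≤ 0) (i : ℕ) : bit i r = 0 := by
  have h2 : ⌊r * 2 ^ i⌋ ≤ 0 :=
    Int.floor_nonpos (mul_nonpos_of_nonpos_of_nonneg hr (by positivity))
  unfold bit
  rw [Int.toNat_of_nonpos h2]

lemma tau_of_nonpos {r : ℝ} (hr : r ≤ 0) : tau r = 0 := by
  have : {i | 0 < i ∧ bit i r = 1} = ∅ := by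
    ext i; simp [bit_of_nonpos hr]
  rw [tau, this, Nat.sInf_empty]

lemma odometer_of_nonpos {r : ℝ} (hr : r ≤ 0) : odometer r = r - 1 := by
  rw [odometer, tau_of_nonpos hr]
  simp

lemma odometer_iterate_nonpos {r : ℝ} (hr : r ≤ 0) (j : ℕ) : odometer^[j] r = r - j := by
  induction j with
  | zero => simp
  | succ n ih =>
    rw [Function.iterate_succ_apply', ih, odometer_of_nonpos (by linarith [Nat.cast_nonneg (α := ℝ) n])]
    push_cast; ring
lemma exists_bit_one {r : ℝ} (h0 : 0 < r) (h1 : r < 1) : ∃ i, 0 < i ∧ bit i r = 1 := by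
  classical
  obtain ⟨n, hn⟩ := pow_unbounded_of_one_lt (1 / r) (one_lt_two (α := ℝ))
  have hP : ∃ i, 1 ≤ r * 2 ^ i := ⟨n, by rw [div_lt_iff₀ h0] at hn; nlinarith⟩
  set i := Nat.find hP with hidef
  have hi : 1 ≤ r * 2 ^ i := Nat.find_spec hP
  have hipos : 0 < i := by
    rcases Nat.eq_zero_or_pos i with h | h
    · exfalso; rw [h] at hi; simp at hi; linarith
    · exact h
  have hprev : ¬ 1 ≤ r * 2 ^ (i - 1) := Nat.find_min hP (Nat.sub_lt hipos one_pos)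
  have hlt : r * 2 ^ i < 2 := by
    have hp : r * 2 ^ (i - 1) < 1 := lt_of_not_ge hprev
    have h2 : (2 : ℝ) ^ i = 2 ^ (i - 1) * 2 := by
      rw [← pow_succ]; congr 1; omega
    nlinarith
  have hfloor : ⌊r * 2 ^ i⌋ = 1 := by
    rw [Int.floor_eq_iff]
    constructor <;> push_cast <;> linarith
  exact ⟨i, hipos, by unfold bit; rw [hfloor]; rfl⟩

lemma tau_pos {r : ℝ} (h0 : 0 < r) (h1 : r < 1) : 0 < tau r ∧ bit (tau r) r = 1 :=
  Nat.sInf_mem (exists_bit_one h0 h1)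

lemma bit_of_lt_tau {r : ℝ} {i : ℕ} (hi : 0 < i) (hit : i < tau r) : bit i r = 0 := by
  have := Nat.notMem_of_lt_sInf (s := {i | 0 < i ∧ bit i r = 1}) hit
  simp only [Set.mem_setOf_eq, not_and] at this
  have h2 := bit_lt_two i r
  have := this hi
  omega

lemma floor_of_lt_tau {r : ℝ} (h0 : 0 < r) (h1 : r < 1) :
    ∀ i, i < tau r → ⌊r * 2 ^ i⌋ = 0 := by
  intro i hi
  induction i with
  | zero =>
    rw [Int.floor_eq_zero_iff]
    constructor <;> simp <;> linarith
  | succ n ih =>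
    have h₀ : ⌊r * 2 ^ n⌋ = 0 := ih (by omega)
    have hlt : r * 2 ^ n < 1 := by
      have := Int.lt_floor_add_one (r * 2 ^ n); rw [h₀] at this; push_cast at this; linarith
    have hub : r * 2 ^ (n + 1) < 2 := by rw [pow_succ]; nlinarith [pow_pos (two_pos (α := ℝ)) n]
    have hlb : (0 : ℝ) ≤ r * 2 ^ (n + 1) := by positivity
    have hf0 : 0 ≤ ⌊r * 2 ^ (n + 1)⌋ := Int.floor_nonneg.mpr hlb
    have hf2 : ⌊r * 2 ^ (n + 1)⌋ < 2 := by
      rw [Int.floor_lt]; push_cast; linarith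
    have hb : bit (n + 1) r = 0 := bit_of_lt_tau (by omega) hi
    unfold bit at hb
    omega

lemma floor_tau {r : ℝ} (h0 : 0 < r) (h1 : r < 1) : ⌊r * 2 ^ tau r⌋ = 1 := by
  obtain ⟨ht, hb⟩ := tau_pos h0 h1
  have h₀ : ⌊r * 2 ^ (tau r - 1)⌋ = 0 := floor_of_lt_tau h0 h1 _ (by omega)
  have hlt : r * 2 ^ (tau r - 1) < 1 := by
    have := Int.lt_floor_add_one (r * 2 ^ (tau r - 1)); rw [h₀] at this; push_cast at this; linarith
  have h2 : (2 : ℝ) ^ tau r = 2 ^ (tau r - 1) * 2 := by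
    rw [← pow_succ]; congr 1; omega
  have hub : r * 2 ^ tau r < 2 := by rw [h2]; nlinarith
  have hlb : (0 : ℝ) ≤ r * 2 ^ tau r := by positivity
  have hf0 : 0 ≤ ⌊r * 2 ^ tau r⌋ := Int.floor_nonneg.mpr hlb
  have hf2 : ⌊r * 2 ^ tau r⌋ < 2 := by rw [Int.floor_lt]; push_cast; linarith
  unfold bit at hb
  omega
lemma zpow_neg_natCast (t : ℕ) : (2 : ℝ) ^ (-(t : ℤ)) = (2 ^ t)⁻¹ := by
  rw [zpow_neg, zpow_natCast]

lemma sum_geom_Ico {t : ℕ} (ht : 1 ≤ t) :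
    ∑ l ∈ Finset.Ico 1 t, (2 : ℝ) ^ (-(l : ℤ)) = 1 - 2 * (2 ^ t)⁻¹ := by
  obtain ⟨n, rfl⟩ : ∃ n, t = n + 1 := ⟨t - 1, by omega⟩
  clear ht
  induction n with
  | zero => simp
  | succ n ih =>
    rw [Finset.sum_Ico_succ_top (by omega), ih, zpow_neg_natCast]
    have h1 : ((2:ℝ) ^ (n+1))⁻¹ = 2 * (2 ^ (n+2))⁻¹ := by
      rw [pow_succ (2:ℝ) (n+1)]
      field_simp
    rw [h1]; ring_nf

lemma odometer_eq {r : ℝ} (ht : 1 ≤ tau r) :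
    odometer r = r + 1 - 3 * (2 ^ tau r)⁻¹ := by
  rw [odometer, sum_geom_Ico ht, zpow_neg_natCast]; ring

lemma r_bounds {r : ℝ} (h0 : 0 < r) (h1 : r < 1) :
    1 ≤ r * 2 ^ tau r ∧ r * 2 ^ tau r < 2 := by
  have hf := floor_tau h0 h1
  constructor
  · have := Int.floor_le (r * 2 ^ tau r); rw [hf] at this; push_cast at this; linarith
  · have := Int.lt_floor_add_one (r * 2 ^ tau r); rw [hf] at this; push_cast at this; linarith

lemma odometer_bounds {r : ℝ} (h0 : 0 < r) (h1 : r < 1) :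
    0 ≤ odometer r ∧ odometer r < 1 := by
  obtain ⟨ht, -⟩ := tau_pos h0 h1
  obtain ⟨hr1, hr2⟩ := r_bounds h0 h1
  have hp : (0:ℝ) < 2 ^ tau r := by positivity
  have he : (2:ℝ) ≤ 2 ^ tau r := by
    calc (2:ℝ) = 2 ^ 1 := by norm_num
    _ ≤ 2 ^ tau r := by apply pow_le_pow_right₀ (by norm_num) ht
  rw [odometer_eq ht]
  have e1 : ((2:ℝ) ^ tau r)⁻¹ * 2 ^ tau r = 1 := inv_mul_cancel₀ (ne_of_gt hp)
  have e2 : (0:ℝ) < (2 ^ tau r)⁻¹ := inv_pos.mpr hp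
  constructor
  · nlinarith
  · nlinarith

lemma floor_odometer_lt {r : ℝ} (h0 : 0 < r) (h1 : r < 1) {i : ℕ} (hi : 1 ≤ i)
    (hit : i < tau r) : ⌊odometer r * 2 ^ i⌋ = (2 : ℤ) ^ i - 1 := by
  obtain ⟨ht, -⟩ := tau_pos h0 h1
  obtain ⟨hr1, hr2⟩ := r_bounds h0 h1
  set t := tau r with htdef
  set D : ℝ := 2 ^ (t - i) with hDdef
  have hD2 : (2:ℝ) ≤ D := by
    calc (2:ℝ) = 2 ^ 1 := by norm_num
    _ ≤ D := by apply pow_le_pow_right₀ (by norm_num); omega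
  have hDpos : (0:ℝ) < D := by positivity
  have h2i : (0:ℝ) < 2 ^ i := by positivity
  have hsplit : (2:ℝ) ^ t = 2 ^ i * D := by
    rw [hDdef, ← pow_add]; congr 1; omega
  have hs : odometer r * 2 ^ i = r * 2 ^ i + 2 ^ i - 3 / D := by
    rw [odometer_eq ht, hsplit]
    field_simp
  have hrl : 1 / D ≤ r * 2 ^ i := by
    rw [div_le_iff₀ hDpos]
    rw [hsplit] at hr1; linarith [hr1]
  have hru : r * 2 ^ i < 2 / D := by
    rw [lt_div_iff₀ hDpos]
    rw [hsplit] at hr2; linarith [hr2]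
  have hd1 : 1 / D ≤ 1 / 2 := by
    apply div_le_div_of_nonneg_left (by norm_num) (by norm_num) hD2
  have hd0 : 0 < 1 / D := by positivity
  rw [Int.floor_eq_iff]
  constructor
  · push_cast
    rw [hs]
    have : 3 / D = 3 * (1 / D) := by ring
    rw [this]
    nlinarith
  · push_cast
    rw [hs]
    have h2 : 2 / D = 2 * (1 / D) := by ring
    have h3 : 3 / D = 3 * (1 / D) := by ring
    rw [h2] at hru
    rw [h3]
    nlinarith

lemma bit_odometer_lt {r : ℝ} (h0 : 0 < r) (h1 : r < 1) {i : ℕ} (hi : 1 ≤ i)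
    (hit : i < tau r) : bit i (odometer r) = 1 := by
  unfold bit
  rw [floor_odometer_lt h0 h1 hi hit]
  have h2 : (2:ℤ) ^ i = 2 * 2 ^ (i - 1) := by
    rw [← pow_succ']; congr 1; omega
  have hp : (0:ℤ) < 2 ^ (i-1) := by positivity
  omega

lemma bit_odometer_self {r : ℝ} (h0 : 0 < r) (h1 : r < 1) :
    bit (tau r) (odometer r) = 0 := by
  obtain ⟨ht, -⟩ := tau_pos h0 h1
  have hf := floor_tau h0 h1
  have hp : (0:ℝ) < 2 ^ tau r := by positivity
  have hs : odometer r * 2 ^ tau r = r * 2 ^ tau r + ((2 ^ tau r - 3 : ℤ) : ℝ) := by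
    rw [odometer_eq ht]
    push_cast
    field_simp
    ring
  unfold bit
  rw [hs, Int.floor_add_intCast, hf]
  have h2 : (2:ℤ) ^ tau r = 2 * 2 ^ (tau r - 1) := by
    rw [← pow_succ']; congr 1; omega
  have hpz : (0:ℤ) < 2 ^ (tau r - 1) := by positivity
  omega

lemma bit_odometer_gt {r : ℝ} (h0 : 0 < r) (h1 : r < 1) {i : ℕ} (hit : tau r < i) :
    bit i (odometer r) = bit i r := by
  obtain ⟨ht, -⟩ := tau_pos h0 h1
  set t := tau r with htdef
  have hsplit : (2:ℝ) ^ i = 2 ^ t * 2 ^ (i - t) := by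
    rw [← pow_add]; congr 1; omega
  have hp : (0:ℝ) < 2 ^ t := by positivity
  have hs : odometer r * 2 ^ i = r * 2 ^ i + ((2 ^ i - 3 * 2 ^ (i - t) : ℤ) : ℝ) := by
    rw [odometer_eq ht, hsplit]
    push_cast
    rw [hsplit]
    field_simp
    ring
  unfold bit
  rw [hs, Int.floor_add_intCast]
  have hf0 : 0 ≤ ⌊r * 2 ^ i⌋ := Int.floor_nonneg.mpr (by positivity)
  have hs0 : 0 ≤ ⌊r * 2 ^ i⌋ + (2 ^ i - 3 * 2 ^ (i - t)) := by
    rw [← Int.floor_add_intCast]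
    apply Int.floor_nonneg.mpr
    rw [← hs]
    have := (odometer_bounds h0 h1).1
    positivity
  have h2i : (2:ℤ) ^ i = 2 * 2 ^ (i - 1) := by rw [← pow_succ']; congr 1; omega
  have h2it : (2:ℤ) ^ (i - t) = 2 * 2 ^ (i - t - 1) := by rw [← pow_succ']; congr 1; omega
  omega

lemma sum_pow_Ico (t : ℕ) : ∑ l ∈ Finset.Ico 1 t, 2 ^ (l - 1) = 2 ^ (t - 1) - 1 := by
  induction t with
  | zero => simp
  | succ n ih =>
    rcases Nat.eq_zero_or_pos n with h | h
    · subst h; simp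
    · rw [Finset.sum_Ico_succ_top (by omega), ih]
      have h1 : 2 ^ n = 2 * 2 ^ (n - 1) := by rw [← pow_succ']; congr 1; omega
      have h2 : 1 ≤ 2 ^ (n - 1) := Nat.one_le_two_pow
      simp only [Nat.add_sub_cancel]
      omega

/-- the encoding sum over the first k bits -/
noncomputable def S (k : ℕ) (r : ℝ) : ℕ := ∑ l ∈ Finset.Icc 1 k, bit l r * 2 ^ (l - 1)

lemma mem_Iset_iff {k j : ℕ} {r : ℝ} : r ∈ Iset k j ↔ r ∈ Set.Ico (0:ℝ) 1 ∧ S k r = j :=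
  Iff.rfl

lemma S_icc_eq_ico (k : ℕ) (r : ℝ) :
    S k r = ∑ l ∈ Finset.Ico 1 (k + 1), bit l r * 2 ^ (l - 1) := by
  rw [S, Finset.Ico_add_one_right_eq_Icc]

lemma S_odometer_le {r : ℝ} (h0 : 0 < r) (h1 : r < 1) {k : ℕ} (htk : tau r ≤ k) :
    S k (odometer r) + 1 = S k r := by
  obtain ⟨ht, hbt⟩ := tau_pos h0 h1
  set t := tau r with htdef
  rw [S_icc_eq_ico, S_icc_eq_ico]
  rw [← Finset.sum_Ico_consecutive _ (show 1 ≤ t + 1 by omega) (show t + 1 ≤ k + 1 by omega),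
      ← Finset.sum_Ico_consecutive _ (show 1 ≤ t + 1 by omega) (show t + 1 ≤ k + 1 by omega)]
  have tail : ∑ l ∈ Finset.Ico (t+1) (k+1), bit l (odometer r) * 2 ^ (l - 1)
      = ∑ l ∈ Finset.Ico (t+1) (k+1), bit l r * 2 ^ (l - 1) := by
    apply Finset.sum_congr rfl
    intro l hl
    rw [Finset.mem_Ico] at hl
    rw [bit_odometer_gt h0 h1 (by omega)]
  rw [tail]
  have head_s : ∑ l ∈ Finset.Ico 1 (t+1), bit l (odometer r) * 2 ^ (l - 1) = 2 ^ (t-1) - 1 := by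
    rw [Finset.sum_Ico_succ_top (by omega), bit_odometer_self h0 h1]
    have : ∑ l ∈ Finset.Ico 1 t, bit l (odometer r) * 2 ^ (l - 1)
        = ∑ l ∈ Finset.Ico 1 t, 2 ^ (l - 1) := by
      apply Finset.sum_congr rfl
      intro l hl
      rw [Finset.mem_Ico] at hl
      rw [bit_odometer_lt h0 h1 (by omega) (by omega), one_mul]
    rw [this, sum_pow_Ico]
    omega
  have head_r : ∑ l ∈ Finset.Ico 1 (t+1), bit l r * 2 ^ (l - 1) = 2 ^ (t-1) := by
    rw [Finset.sum_Ico_succ_top (by omega), hbt]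
    have : ∑ l ∈ Finset.Ico 1 t, bit l r * 2 ^ (l - 1) = 0 := by
      apply Finset.sum_eq_zero
      intro l hl
      rw [Finset.mem_Ico] at hl
      rw [bit_of_lt_tau (by omega) (by omega)]
      ring
    rw [this]
    omega
  rw [head_s, head_r]
  have h2 : 1 ≤ 2 ^ (t - 1) := Nat.one_le_two_pow
  omega

lemma S_odometer_gt {r : ℝ} (h0 : 0 < r) (h1 : r < 1) {k : ℕ} (htk : k < tau r) :
    S k (odometer r) = 2 ^ k - 1 := by
  rw [S_icc_eq_ico]
  have : ∑ l ∈ Finset.Ico 1 (k+1), bit l (odometer r) * 2 ^ (l - 1)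
      = ∑ l ∈ Finset.Ico 1 (k+1), 2 ^ (l - 1) := by
    apply Finset.sum_congr rfl
    intro l hl
    rw [Finset.mem_Ico] at hl
    rw [bit_odometer_lt h0 h1 (by omega) (by omega), one_mul]
  rw [this, sum_pow_Ico]
  simp

lemma S_zero (k : ℕ) : S k (0 : ℝ) = 0 := by
  apply Finset.sum_eq_zero
  intro l _
  rw [bit_of_nonpos le_rfl]
  ring

lemma tau_le_of_S_pos {r : ℝ} {k j : ℕ} (hj : 1 ≤ j) (hS : S k r = j) : tau r ≤ k := by
  have hne : ∃ l ∈ Finset.Icc 1 k, bit l r * 2 ^ (l - 1) ≠ 0 := by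
    by_contra h
    push_neg at h
    rw [S, Finset.sum_eq_zero h] at hS
    omega
  obtain ⟨l, hl, hbl⟩ := hne
  rw [Finset.mem_Icc] at hl
  have hb : bit l r = 1 := by
    have h2 := bit_lt_two l r
    have h0 : bit l r ≠ 0 := by intro h; rw [h] at hbl; simp at hbl
    omega
  calc tau r ≤ l := Nat.sInf_le ⟨by omega, hb⟩
  _ ≤ k := hl.2

lemma pos_of_mem_Iset {r : ℝ} {k j : ℕ} (hj : 1 ≤ j) (hr : r ∈ Iset k j) : 0 < r := by
  rw [mem_Iset_iff] at hr
  obtain ⟨⟨hr0, -⟩, hS⟩ := hr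
  rcases lt_or_eq_of_le hr0 with h | h
  · exact h
  · exfalso; rw [← h, S_zero] at hS; omega

/-- the key one-step lemma -/
lemma L1 {k n : ℕ} (hn : n + 2 ≤ 2 ^ k) :
    Set.Ico (0:ℝ) 1 ∩ odometer ⁻¹' (Iset k n) = Iset k (n + 1) := by
  ext r
  simp only [Set.mem_inter_iff, Set.mem_preimage, mem_Iset_iff]
  constructor
  · rintro ⟨⟨hr0, hr1⟩, ⟨hs01, hsS⟩⟩
    have hrpos : 0 < r := by
      rcases lt_or_eq_of_le hr0 with h | h
      · exact h
      · exfalso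
        rw [← h, odometer_of_nonpos le_rfl, Set.mem_Ico] at hs01
        linarith [hs01.1]
    rcases le_or_gt (tau r) k with htk | htk
    · refine ⟨⟨hr0, hr1⟩, ?_⟩
      have := S_odometer_le hrpos hr1 htk
      omega
    · exfalso
      have := S_odometer_gt hrpos hr1 htk
      rw [hsS] at this
      omega
  · rintro ⟨⟨hr0, hr1⟩, hS⟩
    have hrpos : 0 < r := pos_of_mem_Iset (by omega) ⟨⟨hr0, hr1⟩, hS⟩
    have htk : tau r ≤ k := tau_le_of_S_pos (j := n + 1) (by omega) hS
    obtain ⟨ho0, ho1⟩ := odometer_bounds hrpos hr1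
    refine ⟨⟨hr0, hr1⟩, ⟨⟨ho0, ho1⟩, ?_⟩⟩
    have := S_odometer_le hrpos hr1 htk
    omega

/-- For `k ≥ 2` and `1 ≤ l ≤ 2^{k-2}`, with `m = 2^{k-2} + l`, the sets
`B_m = I^k_{2^{k-1}-2l}` satisfy `T^{-j} B_m = I^k_{2^{k-1}-2l+j}` for
`0 ≤ j ≤ m`, hence `B_m, T^{-1}B_m, …, T^{-m}B_m` are pairwise disjoint. -/
theorem stmt19 (k l : ℕ) (hk : 2 ≤ k) (hl1 : 1 ≤ l) (hl2 : l ≤ 2 ^ (k - 2)) :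
    (∀ j ≤ 2 ^ (k - 2) + l,
      Set.Ico (0 : ℝ) 1 ∩ odometer^[j] ⁻¹' (Iset k (2 ^ (k - 1) - 2 * l)) =
        Iset k (2 ^ (k - 1) - 2 * l + j)) ∧
    Set.PairwiseDisjoint (Set.Iic (2 ^ (k - 2) + l))
      (fun j : ℕ => Set.Ico (0 : ℝ) 1 ∩ odometer^[j] ⁻¹' (Iset k (2 ^ (k - 1) - 2 * l))) := by
  set n0 := 2 ^ (k - 1) - 2 * l with hn0
  have hk2 : 2 ^ (k - 1) = 2 * 2 ^ (k - 2) := by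
    rw [← pow_succ']; congr 1; omega
  have hk4 : 2 ^ k = 4 * 2 ^ (k - 2) := by
    have : (4 : ℕ) * 2 ^ (k - 2) = 2 ^ 2 * 2 ^ (k - 2) := by norm_num
    rw [this, ← pow_add]; congr 1; omega
  have main : ∀ j ≤ 2 ^ (k - 2) + l,
      Set.Ico (0 : ℝ) 1 ∩ odometer^[j] ⁻¹' (Iset k n0) = Iset k (n0 + j) := by
    intro j
    induction j with
    | zero =>
      intro _
      simp only [Function.iterate_zero, Set.preimage_id', Nat.add_zero]
      exact Set.inter_eq_self_of_subset_right (fun r hr => hr.1)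
    | succ j ih =>
      intro hj
      have ihj := ih (by omega)
      have hbound : (n0 + j) + 2 ≤ 2 ^ k := by
        have h1 : 1 ≤ 2 ^ (k - 2) := Nat.one_le_two_pow
        omega
      ext r
      simp only [Set.mem_inter_iff, Set.mem_preimage, Function.iterate_succ_apply]
      constructor
      · rintro ⟨hrI, hpre⟩
        have hrpos : 0 < r := by
          rcases lt_or_eq_of_le hrI.1 with h | h
          · exact h
          · exfalso
            rw [← h, odometer_of_nonpos le_rfl,
              odometer_iterate_nonpos (by norm_num)] at hpre
            rw [mem_Iset_iff, Set.mem_Ico] at hpre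
            have := hpre.1.1
            have hj0 : (0:ℝ) ≤ (j : ℝ) := Nat.cast_nonneg j
            linarith
        obtain ⟨ho0, ho1⟩ := odometer_bounds hrpos hrI.2
        have hmid : odometer r ∈ Iset k (n0 + j) := by
          rw [← ihj]
          exact ⟨⟨ho0, ho1⟩, hpre⟩
        have : r ∈ Iset k (n0 + j + 1) := by
          rw [← L1 hbound]
          exact ⟨hrI, hmid⟩
        rwa [Nat.add_assoc] at this
        
      · intro hr
        have hr' : r ∈ Iset k (n0 + j + 1) := by rwa [← Nat.add_assoc] at hr
        rw [← L1 hbound] at hr'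
        obtain ⟨hrI, hpre⟩ := hr'
        rw [Set.mem_preimage, ← ihj] at hpre
        exact ⟨hrI, hpre.2⟩
  refine ⟨main, ?_⟩
  intro a ha b hb hab
  rw [Set.mem_Iic] at ha hb
  simp only [Function.onFun]
  rw [main a ha, main b hb]
  rw [Set.disjoint_left]
  intro r hra hrb
  rw [mem_Iset_iff] at hra hrb
  have h1 := hra.2
  have h2 := hrb.2
  omega
end
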